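/- arXiv:1509.03910 — 10 statements merged into one kernel-verified Lean document; each statement's English description precedes it below -/
import Mathlib

section
/- Let p be a prime and r ≥ 1. Suppose a_0, ..., a_{r-1} are natural numbers, not all zero, such that (p^r - 1) divides the sum over k of p^k * a_k. Then the sum over k of a_k is at least r(p-1). Moreover, if equality holds, then a_k = p - 1 for all k. -/
/-!
Read `∑ p^k a_k` modulo `p^r - 1` as a number with `r` cyclic base-`p` digits `a_k`. Since
`p^r ≡ 1`, a digit `a_j ≥ p` can be carried cyclically to position `j + 1` without changing the
residue; each carry lowers the digit sum by `p - 1` and keeps some digit nonzero. When all digits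
are below `p`, the value lies in `(0, p^r - 1]`, so divisibility forces it to be `p^r - 1`, i.e.
every digit equals `p - 1`.
-/

section CyclicDigits

variable {p r : ℕ}

lemma sum_fin_pow_mul_pred (hp : 1 ≤ p) (r : ℕ) :
    ∑ k : Fin r, p ^ (k : ℕ) * (p - 1) = p ^ r - 1 := by
  rw [← Finset.sum_mul, Fin.sum_univ_eq_sum_range (p ^ ·), geom_sum_mul_of_one_le hp]

lemma pow_finRotate_modEq (hp : 1 ≤ p) (j : Fin r) :
    p ^ (finRotate r j : ℕ) ≡ p ^ ((j : ℕ) + 1) [MOD p ^ r - 1] := by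
  obtain _ | n := r
  · exact j.elim0
  rw [coe_finRotate]
  split_ifs with hj
  · subst hj
    rw [Fin.val_last, pow_zero]
    exact (Nat.modEq_sub (Nat.one_le_pow _ _ hp)).symm
  · rfl

lemma sum_pow_mul_add_single (a : Fin r → ℕ) (j : Fin r) (x : ℕ) :
    ∑ k : Fin r, p ^ (k : ℕ) * (a + Pi.single j x : Fin r → ℕ) k =
      ∑ k : Fin r, p ^ (k : ℕ) * a k + p ^ (j : ℕ) * x := by
  simp [mul_add, Finset.sum_add_distrib, Pi.single_apply]

lemma eq_pred_of_forall_lt_of_dvd (hp : 1 ≤ p) (a : Fin r → ℕ) (hlt : ∀ k, a k < p)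
    (hne : ∃ k, a k ≠ 0) (hdvd : (p ^ r - 1) ∣ ∑ k : Fin r, p ^ (k : ℕ) * a k) (k : Fin r) :
    a k = p - 1 := by
  have hle : ∀ i ∈ (Finset.univ : Finset (Fin r)),
      p ^ (i : ℕ) * a i ≤ p ^ (i : ℕ) * (p - 1) :=
    fun i _ => Nat.mul_le_mul_left _ (Nat.le_sub_one_of_lt (hlt i))
  have hpos : 0 < ∑ k : Fin r, p ^ (k : ℕ) * a k := by
    obtain ⟨i, hi⟩ := hne
    exact Finset.sum_pos' (fun _ _ => Nat.zero_le _)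
      ⟨i, Finset.mem_univ i, Nat.mul_pos (Nat.pow_pos hp) (Nat.pos_of_ne_zero hi)⟩
  have hmax : ∑ k : Fin r, p ^ (k : ℕ) * a k = ∑ k : Fin r, p ^ (k : ℕ) * (p - 1) := by
    refine le_antisymm (Finset.sum_le_sum hle) ?_
    rw [sum_fin_pow_mul_pred hp]
    exact Nat.le_of_dvd hpos hdvd
  exact Nat.eq_of_mul_eq_mul_left (Nat.pow_pos hp)
    ((Finset.sum_eq_sum_iff_of_le hle).mp hmax k (Finset.mem_univ k))

lemma exists_cyclic_carry (hp : 1 ≤ p) (a : Fin r → ℕ) {j : Fin r} (hj : p ≤ a j)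
    (hdvd : (p ^ r - 1) ∣ ∑ k : Fin r, p ^ (k : ℕ) * a k) :
    ∃ b : Fin r → ℕ, ∑ k, b k + p = ∑ k, a k + 1 ∧ (∃ k, b k ≠ 0) ∧
      (p ^ r - 1) ∣ ∑ k : Fin r, p ^ (k : ℕ) * b k := by
  set c := Function.update a j (a j - p)
  have hac : a = c + Pi.single j p := by
    ext k
    rcases eq_or_ne k j with rfl | hk
    · simp [c, Nat.sub_add_cancel hj]
    · simp [c, hk]
  refine ⟨c + Pi.single (finRotate r j) 1, ?_, ⟨finRotate r j, by simp⟩, ?_⟩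
  · rw [hac]
    simp only [Pi.add_apply, Finset.sum_add_distrib, Finset.sum_pi_single', Finset.mem_univ, if_true]
    ring
  · rw [hac, sum_pow_mul_add_single, ← pow_succ] at hdvd
    rw [sum_pow_mul_add_single, mul_one, ← Nat.modEq_zero_iff_dvd]
    exact ((pow_finRotate_modEq hp j).add_left _).trans (Nat.modEq_zero_iff_dvd.mpr hdvd)

theorem le_sum_of_dvd_sum_pow_mul (hp : 2 ≤ p) (a : Fin r → ℕ) (hne : ∃ k, a k ≠ 0)
    (hdvd : (p ^ r - 1) ∣ ∑ k : Fin r, p ^ (k : ℕ) * a k) :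
    r * (p - 1) ≤ ∑ k, a k ∧ (∑ k, a k = r * (p - 1) → ∀ k, a k = p - 1) := by
  induction hs : ∑ k, a k using Nat.strong_induction_on generalizing a with
  | _ n ih =>
    by_cases hlt : ∀ k, a k < p
    · have hpred := eq_pred_of_forall_lt_of_dvd (by omega) a hlt hne hdvd
      have hsum : ∑ k, a k = r * (p - 1) := by simp [hpred]
      exact ⟨by omega, fun _ => hpred⟩
    · push Not at hlt
      obtain ⟨j, hj⟩ := hlt
      obtain ⟨b, hsum, hbne, hbdvd⟩ := exists_cyclic_carry (by omega) a hj hdvd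
      have hb := (ih _ (by omega) b hbne hbdvd rfl).1
      exact ⟨by omega, fun heq => by omega⟩

end CyclicDigits

theorem stmt_0_general (p r : ℕ) (hp : p.Prime) (a : Fin r → ℕ)
    (hne : ∃ k, a k ≠ 0)
    (hdvd : (p ^ r - 1) ∣ ∑ k : Fin r, p ^ (k : ℕ) * a k) :
    r * (p - 1) ≤ ∑ k, a k ∧
      (∑ k, a k = r * (p - 1) → ∀ k, a k = p - 1) :=
  le_sum_of_dvd_sum_pow_mul hp.two_le a hne hdvd

/-- Quillen's lemma: if `a_0, ..., a_{r-1}` are natural numbers, not all zero, such that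
`p^r - 1` divides `∑ p^k * a_k`, then `∑ a_k ≥ r * (p - 1)`, with equality forcing
`a_k = p - 1` for all `k`. -/
theorem stmt_0 (p r : ℕ) (hp : p.Prime) (hr : 1 ≤ r) (a : Fin r → ℕ)
    (hne : ∃ k, a k ≠ 0)
    (hdvd : (p ^ r - 1) ∣ ∑ k : Fin r, p ^ (k : ℕ) * a k) :
    r * (p - 1) ≤ ∑ k, a k ∧
      (∑ k, a k = r * (p - 1) → ∀ k, a k = p - 1) :=
  stmt_0_general p r hp a hne hdvd
end

section
/- Let R be a ℤ-graded commutative algebra over a field F of odd characteristic, and let x ∈ R with x_e its sum of even-degree homogeneous components. Then x is nilpotent if and only if x_e is nilpotent. -/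
open scoped Classical DirectSum

/-! In odd characteristic the graded-commutativity rule `x * x = -(x * x)` forces every
homogeneous element of odd degree to square to zero, and odd components anticommute, so the odd
part `x - x_e` squares to zero. The even components are central, hence `x_e` commutes with
`x - x_e`, and adding a commuting nilpotent element does not change nilpotency. -/

theorem Commute.isNilpotent_add_iff_left {R : Type*} [Ring R] {x y : R} (h : Commute x y)
    (hy : IsNilpotent y) : IsNilpotent (x + y) ↔ IsNilpotent x := by
  refine ⟨fun hxy => ?_, fun hx => h.isNilpotent_add hx hy⟩
  simpa using (h.add_left (Commute.refl y)).isNilpotent_sub hxy hy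

theorem sq_sum_eq_zero_of_anticommute {ι R : Type*} [Ring R] (f : ι → R) (s : Finset ι)
    (hanti : ∀ i ∈ s, ∀ j ∈ s, i ≠ j → f i * f j = -(f j * f i))
    (hsq : ∀ i ∈ s, f i * f i = 0) :
    (∑ i ∈ s, f i) ^ 2 = 0 := by
  induction s using Finset.cons_induction with
  | empty => simp
  | cons a s ha ih =>
    set y := ∑ i ∈ s, f i
    have hay : f a * y + y * f a = 0 := by
      rw [Finset.mul_sum, Finset.sum_mul, ← Finset.sum_add_distrib]
      refine Finset.sum_eq_zero fun i hi => ?_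
      rw [hanti a (by simp) i (by simp [hi]) (by rintro rfl; exact ha hi), neg_add_cancel]
    calc (∑ i ∈ Finset.cons a s ha, f i) ^ 2
        = f a * f a + (f a * y + y * f a) + y ^ 2 := by rw [Finset.sum_cons]; noncomm_ring
      _ = 0 := by
        rw [hsq a (by simp), hay,
          ih (fun i hi j hj => hanti i (by simp [hi]) j (by simp [hj])) (fun i hi => hsq i (by simp [hi]))]
        simp

section GradedCommutative

variable {F R : Type*} [Field F] [Ring R] [Algebra F R]

def GradedCommutative (𝒜 : ℤ → Submodule F R) : Prop :=
  ∀ (i j : ℤ) (x y : R), x ∈ 𝒜 i → y ∈ 𝒜 j → x * y = ((-1 : F) ^ (i * j)) • (y * x)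

variable {𝒜 : ℤ → Submodule F R}

theorem GradedCommutative.commute_of_even (h𝒜 : GradedCommutative 𝒜) {i j : ℤ} {x y : R}
    (hx : x ∈ 𝒜 i) (hy : y ∈ 𝒜 j) (hi : Even i) : Commute x y := by
  have h := h𝒜 i j x y hx hy
  rwa [(hi.mul_right j).neg_one_zpow, one_smul] at h

theorem GradedCommutative.anticommute_of_odd (h𝒜 : GradedCommutative 𝒜) {i j : ℤ} {x y : R}
    (hx : x ∈ 𝒜 i) (hy : y ∈ 𝒜 j) (hi : Odd i) (hj : Odd j) : x * y = -(y * x) := by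
  have h := h𝒜 i j x y hx hy
  rwa [(hi.mul hj).neg_one_zpow, neg_smul, one_smul] at h

theorem GradedCommutative.mul_self_eq_zero_of_odd (h𝒜 : GradedCommutative 𝒜)
    (hF : ringChar F ≠ 2) {i : ℤ} {x : R} (hx : x ∈ 𝒜 i) (hi : Odd i) : x * x = 0 := by
  have h : (2 : F) • (x * x) = 0 := by
    rw [two_smul, ← eq_neg_iff_add_eq_zero]
    exact h𝒜.anticommute_of_odd hx hx hi hi
  exact (smul_eq_zero.mp h).resolve_left (Ring.two_ne_zero hF)

variable [DirectSum.Decomposition 𝒜]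

theorem sum_even_add_sum_odd_decompose (x : R) :
    ∑ i ∈ (DirectSum.decompose 𝒜 x).support with Even i, (DirectSum.decompose 𝒜 x i : R) +
      ∑ i ∈ (DirectSum.decompose 𝒜 x).support with Odd i, (DirectSum.decompose 𝒜 x i : R) = x := by
  simp_rw [← Int.not_even_iff_odd]
  rw [Finset.sum_filter_add_sum_filter_not, DirectSum.sum_support_decompose]

theorem GradedCommutative.sq_sum_odd_decompose (h𝒜 : GradedCommutative 𝒜)
    (hF : ringChar F ≠ 2) (x : R) :
    (∑ i ∈ (DirectSum.decompose 𝒜 x).support with Odd i, (DirectSum.decompose 𝒜 x i : R)) ^ 2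
      = 0 :=
  sq_sum_eq_zero_of_anticommute _ _
    (fun _ hi _ hj _ => h𝒜.anticommute_of_odd (SetLike.coe_mem _) (SetLike.coe_mem _)
      (Finset.mem_filter.mp hi).2 (Finset.mem_filter.mp hj).2)
    (fun _ hi => h𝒜.mul_self_eq_zero_of_odd hF (SetLike.coe_mem _) (Finset.mem_filter.mp hi).2)

theorem GradedCommutative.commute_sum_even_sum_decompose (h𝒜 : GradedCommutative 𝒜) (x : R)
    (s : Finset ℤ) :
    Commute (∑ i ∈ (DirectSum.decompose 𝒜 x).support with Even i, (DirectSum.decompose 𝒜 x i : R))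
      (∑ j ∈ s, (DirectSum.decompose 𝒜 x j : R)) :=
  Commute.sum_left _ _ _ fun _ hi => Commute.sum_right _ _ _ fun _ _ =>
    h𝒜.commute_of_even (SetLike.coe_mem _) (SetLike.coe_mem _) (Finset.mem_filter.mp hi).2

end GradedCommutative

/-- In a ℤ-graded commutative algebra over a field of odd characteristic,
an element `x` is nilpotent if and only if the sum `x_e` of its even-degree
homogeneous components is nilpotent. -/
theorem stmt_2 (F : Type*) [Field F] (hF : Odd (ringChar F))
    (R : Type*) [Ring R] [Algebra F R]
    (𝒜 : ℤ → Submodule F R) [GradedAlgebra 𝒜]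
    (hcomm : ∀ (i j : ℤ) (x y : R), x ∈ 𝒜 i → y ∈ 𝒜 j →
      x * y = ((-1 : F) ^ (i * j)) • (y * x))
    (x xe : R)
    (hxe : xe = ∑ i ∈ (DirectSum.decompose 𝒜 x).support,
      if Even i then ((DirectSum.decompose 𝒜 x i : R)) else 0) :
    IsNilpotent x ↔ IsNilpotent xe := by
  have hF2 : ringChar F ≠ 2 := fun h => Nat.not_odd_iff_even.mpr even_two (h ▸ hF)
  have h𝒜 : GradedCommutative 𝒜 := hcomm
  rw [← Finset.sum_filter] at hxe
  subst hxe
  conv_lhs => rw [← sum_even_add_sum_odd_decompose (𝒜 := 𝒜) x]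
  exact (h𝒜.commute_sum_even_sum_decompose x _).isNilpotent_add_iff_left
    ⟨2, h𝒜.sq_sum_odd_decompose hF2 x⟩
end

section
/- Let E/F be a Galois field extension with Galois group G, V a vector space over F, and W an E-linear subspace of V ⊗_F E that is preserved by the action of each g ∈ G (acting on the E tensor factor). Then the natural map (W ∩ V) ⊗_F E → W is an isomorphism; in particular W is spanned over E by its elements lying in V. -/
/-!
Write `w ∈ W` as `∑ eᵢ ⊗ vᵢ` and induct on the number of terms. After scaling so that one
coefficient is `1`, either every coefficient lies in `F`, so `w ∈ W ∩ V`, or some `eₖ ∉ F`, and then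
some `g ∈ G` moves `eₖ`. Both `g • w - w` (which loses the coefficient `1`) and a suitable
`w - c • (g • w - w)` (which loses the `k`-th term) are shorter elements of `W`, and `w` is a
combination of the two.
-/

open scoped TensorProduct
open TensorProduct

namespace GaloisDescent

variable {F E V : Type*} [Field F] [Field E] [Algebra F E] [AddCommGroup V] [Module F V]

def baseSpan (W : Submodule E (E ⊗[F] V)) : Submodule E (E ⊗[F] V) :=
  Submodule.span E ((W : Set (E ⊗[F] V)) ∩ Set.range fun v : V => (1 : E) ⊗ₜ[F] v)

variable {ι : Type*} (v : ι → V) (s : Finset ι)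

lemma sum_tmul_mem_range_of_forall_mem_range (e : ι → E)
    (he : ∀ i ∈ s, e i ∈ Set.range (algebraMap F E)) :
    ∑ i ∈ s, e i ⊗ₜ[F] v i ∈ Set.range fun v : V => (1 : E) ⊗ₜ[F] v := by
  have hterm : ∀ i ∈ s, e i ⊗ₜ[F] v i ∈ LinearMap.range (TensorProduct.mk F E V 1) := by
    intro i hi
    obtain ⟨f, hf⟩ := he i hi
    exact ⟨f • v i, by rw [mk_apply, tmul_smul, smul_tmul', ← hf, Algebra.algebraMap_eq_smul_one]⟩
  exact Submodule.sum_mem _ hterm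

lemma rTensor_sum_tmul_sub (g : E →ₗ[F] E) (e : ι → E) :
    LinearMap.rTensor V g (∑ i ∈ s, e i ⊗ₜ[F] v i) - ∑ i ∈ s, e i ⊗ₜ[F] v i =
      ∑ i ∈ s, (g (e i) - e i) ⊗ₜ[F] v i := by
  simp [map_sum, sub_tmul, Finset.sum_sub_distrib]

lemma sum_sub_mul_tmul (a b : ι → E) (c : E) :
    ∑ i ∈ s, (a i - c * b i) ⊗ₜ[F] v i =
      ∑ i ∈ s, a i ⊗ₜ[F] v i - c • ∑ i ∈ s, b i ⊗ₜ[F] v i := by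
  simp [sub_tmul, Finset.sum_sub_distrib, Finset.smul_sum, smul_tmul']

variable {W : Submodule E (E ⊗[F] V)} {v s}

lemma sum_tmul_mem_baseSpan_of_eq_zero [DecidableEq ι]
    (ih : ∀ t ⊂ s, ∀ e : ι → E, ∑ i ∈ t, e i ⊗ₜ[F] v i ∈ W →
      ∑ i ∈ t, e i ⊗ₜ[F] v i ∈ baseSpan W)
    {j : ι} (hj : j ∈ s) (e : ι → E) (hej : e j = 0) (hW : ∑ i ∈ s, e i ⊗ₜ[F] v i ∈ W) :
    ∑ i ∈ s, e i ⊗ₜ[F] v i ∈ baseSpan W := by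
  rw [← Finset.sum_erase s (by rw [hej, zero_tmul])] at hW ⊢
  exact ih _ (Finset.erase_ssubset hj) e hW

lemma sum_tmul_mem_baseSpan_of_eq_one [IsGalois F E] [DecidableEq ι]
    (hG : ∀ g : E ≃ₐ[F] E, ∀ w ∈ W, LinearMap.rTensor V g.toLinearMap w ∈ W)
    (ih : ∀ t ⊂ s, ∀ e : ι → E, ∑ i ∈ t, e i ⊗ₜ[F] v i ∈ W →
      ∑ i ∈ t, e i ⊗ₜ[F] v i ∈ baseSpan W)
    {j : ι} (hj : j ∈ s) (a : ι → E) (haj : a j = 1) (hW : ∑ i ∈ s, a i ⊗ₜ[F] v i ∈ W) :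
    ∑ i ∈ s, a i ⊗ₜ[F] v i ∈ baseSpan W := by
  by_cases hF : ∀ i ∈ s, a i ∈ Set.range (algebraMap F E)
  · exact Submodule.subset_span ⟨hW, sum_tmul_mem_range_of_forall_mem_range v s a hF⟩
  obtain ⟨k, hk, hkF⟩ := not_forall₂.mp hF
  obtain ⟨g, hg⟩ : ∃ g : E ≃ₐ[F] E, g (a k) ≠ a k := by
    simpa using (InfiniteGalois.mem_range_algebraMap_iff_fixed (a k)).not.mp hkF
  have hd : g (a k) - a k ≠ 0 := sub_ne_zero.mpr hg
  let c := a k * (g (a k) - a k)⁻¹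
  have huW : ∑ i ∈ s, (g (a i) - a i) ⊗ₜ[F] v i ∈ W :=
    rTensor_sum_tmul_sub v s g.toLinearMap a ▸ sub_mem (hG g _ hW) hW
  have hu := sum_tmul_mem_baseSpan_of_eq_zero ih hj _ (by simp [haj]) huW
  have hw := sum_tmul_mem_baseSpan_of_eq_zero ih hk (fun i => a i - c * (g (a i) - a i))
    (by simp only [c, mul_assoc, inv_mul_cancel₀ hd, mul_one, sub_self])
    (sum_sub_mul_tmul (F := F) v s a _ c ▸ sub_mem hW (W.smul_mem c huW))
  have := add_mem hw (Submodule.smul_mem _ c hu)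
  rwa [sum_sub_mul_tmul, sub_add_cancel] at this

theorem sum_tmul_mem_baseSpan [IsGalois F E]
    (hG : ∀ g : E ≃ₐ[F] E, ∀ w ∈ W, LinearMap.rTensor V g.toLinearMap w ∈ W)
    (v : ι → V) (s : Finset ι) (e : ι → E) (hW : ∑ i ∈ s, e i ⊗ₜ[F] v i ∈ W) :
    ∑ i ∈ s, e i ⊗ₜ[F] v i ∈ baseSpan W := by
  classical
  induction s using Finset.strongInduction generalizing e with
  | H s ih =>
    obtain rfl | ⟨j, hj⟩ := s.eq_empty_or_nonempty
    · simp
    by_cases hej : e j = 0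
    · exact sum_tmul_mem_baseSpan_of_eq_zero ih hj e hej hW
    have hscale : ∑ i ∈ s, e i ⊗ₜ[F] v i = e j • ∑ i ∈ s, ((e j)⁻¹ * e i) ⊗ₜ[F] v i := by
      simp [Finset.smul_sum, smul_tmul', hej]
    rw [hscale] at hW ⊢
    exact Submodule.smul_mem _ _ <| sum_tmul_mem_baseSpan_of_eq_one hG ih hj _
      (inv_mul_cancel₀ hej) ((Submodule.smul_mem_iff _ hej).mp hW)

end GaloisDescent

/-- Galois descent for subspaces: if `E/F` is Galois, `V` an `F`-vector space, and
`W ⊆ E ⊗_F V` an `E`-subspace preserved by the Galois action on the `E` factor,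
then `W` is spanned over `E` by its elements belonging to `V` (i.e. of the form `1 ⊗ v`);
equivalently the natural map `(W ∩ V) ⊗_F E → W` is an isomorphism. -/
theorem stmt_5 (F E : Type*) [Field F] [Field E] [Algebra F E] [IsGalois F E]
    (V : Type*) [AddCommGroup V] [Module F V]
    (W : Submodule E (E ⊗[F] V))
    (hW : ∀ (g : E ≃ₐ[F] E), ∀ w ∈ W, (LinearMap.rTensor V g.toLinearMap) w ∈ W) :
    W = Submodule.span E
      ((W : Set (E ⊗[F] V)) ∩ Set.range (fun v : V => (1 : E) ⊗ₜ[F] v)) := by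
  refine le_antisymm (fun w hw => ?_) (Submodule.span_le.mpr Set.inter_subset_left)
  obtain ⟨t, rfl⟩ := TensorProduct.exists_finset w
  exact GaloisDescent.sum_tmul_mem_baseSpan hW Prod.snd t Prod.fst hw
end

section
/- Let E be a finite separable field extension of F, and A a commutative F-algebra. Then the natural inclusion N(A) ⊗_F E → N(A ⊗_F E) is an isomorphism, where N denotes the nilradical (set of nilpotent elements). -/
open scoped TensorProduct

/-! Over a reduced ring `B`, the coordinates of `x ∈ B ⊗[F] E` in a basis `bᵢ` of `E` are the
traces `Tr(x · dᵢ)` against the trace-dual basis `dᵢ`, which exists because `E/F` is separable.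
A nilpotent `x` has nilpotent, hence zero, traces, so `B ⊗[F] E` is reduced. For `B = A ⧸ N(A)`
this says that every nilpotent of `E ⊗[F] A` dies in `E ⊗[F] (A ⧸ N(A))`, and by right exactness
of `E ⊗[F] -` that kernel is the image of `E ⊗[F] N(A)`; injectivity is flatness of `E` over `F`. -/

open Algebra.TensorProduct Module

theorem Algebra.trace_one_tmul {R S B : Type*} [CommRing R] [CommRing S] [Algebra R S]
    [Module.Free R S] [Module.Finite R S] [CommRing B] [Algebra R B] (s : S) :
    Algebra.trace B (B ⊗[R] S) (1 ⊗ₜ s) = algebraMap R B (Algebra.trace R S s) := by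
  have : Algebra.lmul B (B ⊗[R] S) (1 ⊗ₜ s) = (Algebra.lmul R S s).baseChange B := by
    ext t
    simp [Algebra.TensorProduct.tmul_mul_tmul]
  rw [Algebra.trace_apply, this, LinearMap.trace_baseChange]
  rfl

section Separable

variable {F E : Type*} [Field F] [Field E] [Algebra F E] [FiniteDimensional F E]
  [Algebra.IsSeparable F E]

theorem Algebra.TensorProduct.basis_repr_eq_trace_mul_traceDual {ι : Type*} [Fintype ι]
    [DecidableEq ι] (b : Basis ι F E) (B : Type*) [CommRing B] [Algebra F B]
    (x : B ⊗[F] E) (i : ι) :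
    (basis B b).repr x i = Algebra.trace B (B ⊗[F] E) (x * (1 ⊗ₜ b.traceDual i)) := by
  change (basis B b).coord i x =
    ((Algebra.trace B (B ⊗[F] E)).comp (LinearMap.mulRight B (1 ⊗ₜ b.traceDual i))) x
  congr 1
  refine (basis B b).ext fun j ↦ ?_
  simp [basis_apply, Algebra.trace_one_tmul, Finsupp.single_apply]

theorem isReduced_tensorProduct_of_isSeparable (B : Type*) [CommRing B] [Algebra F B]
    [IsReduced B] : IsReduced (B ⊗[F] E) := by
  refine ⟨fun x hx ↦ ?_⟩
  let b := Basis.ofVectorSpace F E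
  classical
  refine (basis B b).repr.map_eq_zero_iff.mp (Finsupp.ext fun i ↦ ?_)
  rw [basis_repr_eq_trace_mul_traceDual]
  exact (Algebra.isNilpotent_trace_of_isNilpotent
    ((Commute.all _ _).isNilpotent_mul_right hx)).eq_zero

theorem nilradical_tensorProduct_eq_map (A : Type*) [CommRing A] [Algebra F A] :
    nilradical (E ⊗[F] A) = (nilradical A).map includeRight := by
  refine le_antisymm (fun x hx ↦ ?_) (Ideal.map_le_iff_le_comap.mpr fun a ha ↦ ?_)
  · have : IsReduced (A ⧸ nilradical A) :=
      (Ideal.isRadical_iff_quotient_reduced _).mp (Ideal.radical_isRadical _)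
    have : IsReduced (E ⊗[F] (A ⧸ nilradical A)) :=
      have := isReduced_tensorProduct_of_isSeparable (F := F) (E := E) (A ⧸ nilradical A)
      isReduced_of_injective (Algebra.TensorProduct.comm F E (A ⧸ nilradical A))
        (AlgEquiv.injective _)
    have hker : RingHom.ker (map (AlgHom.id F E) (Ideal.Quotient.mkₐ F (nilradical A))) =
        (nilradical A).map includeRight :=
      (lTensor_ker _ (Ideal.Quotient.mkₐ_surjective F _)).trans <| by
        rw [← RingHom.ker_coe_toRingHom, Ideal.Quotient.mkₐ_ker]
    rw [← hker]
    exact ((mem_nilradical.mp hx).map _).eq_zero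
  · exact (mem_nilradical.mp ha).map includeRight

end Separable

/-- For a finite separable field extension `E/F` and a commutative `F`-algebra `A`,
the natural map `N(A) ⊗_F E → N(A ⊗_F E)` is an isomorphism: the base change of the
inclusion of the nilradical is injective, with range exactly the nilradical of `E ⊗_F A`. -/
theorem stmt_6 (F E A : Type*) [Field F] [Field E] [Algebra F E]
    [FiniteDimensional F E] [Algebra.IsSeparable F E]
    [CommRing A] [Algebra F A] :
    Function.Injective
        (LinearMap.baseChange E ((nilradical A).restrictScalars F).subtype) ∧
      LinearMap.range (LinearMap.baseChange E ((nilradical A).restrictScalars F).subtype) =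
        (nilradical (E ⊗[F] A)).restrictScalars E := by
  refine ⟨?_, ?_⟩
  · rw [LinearMap.baseChange_eq_ltensor]
    exact Module.Flat.lTensor_preserves_injective_linearMap _ (Submodule.injective_subtype _)
  · rw [nilradical_tensorProduct_eq_map]
    exact TensorProduct.AlgebraTensorModule.range_lTensor_idealMap E E _
end

section
/- Let k be an algebraically closed field of characteristic p. Every injective group endomorphism of the additive group (k, +) that is given by a polynomial function (equivalently, an injective endomorphism of the algebraic group G_a over k) has the form u ↦ c·u^{p^d} for some c ∈ k^× and d ≥ 0. -/
/-!
Since `f` has trivial kernel, `0` is the only root of `P`, so over the algebraically closed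
field `k` the polynomial is `c * X ^ n` and `u ↦ u ^ n` is additive. Writing `n = p ^ d * m`
with `p ∤ m` and using that `k` is perfect, `u ↦ u ^ m` is additive too; comparing the
coefficients of `X ^ (m - 1)` in `(X + 1) ^ m = X ^ m + 1` gives `m = 1`.
-/

open Polynomial

theorem Polynomial.Splits.eval_eq_leadingCoeff_mul_pow {R : Type*} [CommRing R] [IsDomain R]
    {f : R[X]} (hf : f.Splits) (h : ∀ r ∈ f.roots, r = 0) (x : R) :
    f.eval x = f.leadingCoeff * x ^ f.roots.card := by
  rw [hf.eval_eq_prod_roots, Multiset.eq_replicate_card.mpr h]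
  simp

def IsAdditivePow (R : Type*) [Semiring R] (n : ℕ) : Prop :=
  ∀ x y : R, (x + y) ^ n = x ^ n + y ^ n

namespace IsAdditivePow

theorem of_expChar_pow_mul {R : Type*} [CommRing R] {p : ℕ} [ExpChar R p] [PerfectRing R p]
    {d m : ℕ} (h : IsAdditivePow R (p ^ d * m)) : IsAdditivePow R m := by
  intro x y
  obtain ⟨u, rfl⟩ := (PerfectRing.bijective_frobenius (R := R) (p := p ^ d)).2 x
  obtain ⟨v, rfl⟩ := (PerfectRing.bijective_frobenius (R := R) (p := p ^ d)).2 y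
  simpa only [pow_mul, add_pow_expChar_pow] using h u v

theorem eq_one {R : Type*} [CommRing R] [IsDomain R] [Infinite R] {m : ℕ}
    (h : IsAdditivePow R m) (hm : (m : R) ≠ 0) : m = 1 := by
  by_contra hm1
  have hm0 : m ≠ 0 := by rintro rfl; exact hm Nat.cast_zero
  have hpoly : (X + 1 : R[X]) ^ m = X ^ m + 1 :=
    Polynomial.funext fun r => by simpa using h r 1
  -- the coefficient of `X ^ (m - 1)` is `m` on the left and `0` on the right
  have hcoeff := congrArg (coeff · (m - 1)) hpoly
  simp only [coeff_X_add_one_pow, coeff_add, coeff_X_pow, coeff_one] at hcoeff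
  rw [if_neg (by omega), if_neg (by omega), add_zero, Nat.choose_symm (by omega),
    Nat.choose_one_right] at hcoeff
  exact hm hcoeff

theorem exists_eq_pow {K : Type*} [Field K] [Infinite K] (p : ℕ) [Fact p.Prime] [CharP K p]
    [PerfectRing K p] {n : ℕ} (h : IsAdditivePow K n) (hn : n ≠ 0) : ∃ d, n = p ^ d := by
  obtain ⟨d, m, hpm, rfl⟩ := Nat.exists_eq_pow_mul_and_not_dvd hn p (Fact.out : p.Prime).ne_one
  have hm : (m : K) ≠ 0 := fun h => hpm ((CharP.cast_eq_zero_iff K p m).1 h)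
  exact ⟨d, by rw [h.of_expChar_pow_mul.eq_one hm, mul_one]⟩

end IsAdditivePow

theorem AddMonoidHom.isAdditivePow_of_eq_mul_pow {K : Type*} [Field K] (f : K →+ K) {c : K}
    (hc : c ≠ 0) {n : ℕ} (hf : ∀ u, f u = c * u ^ n) : IsAdditivePow K n := fun x y =>
  mul_left_cancel₀ hc <| by rw [← hf, map_add, hf, hf, mul_add]

/-- Every injective additive-group endomorphism of `(k, +)` (`k` algebraically closed of
characteristic `p`) that is given by a polynomial function has the form
`u ↦ c * u^(p^d)` for some `c ≠ 0` and `d ≥ 0`. -/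
theorem stmt_8 (p : ℕ) [Fact p.Prime] (k : Type*) [Field k] [IsAlgClosed k] [CharP k p]
    (f : k →+ k) (P : Polynomial k) (hfP : ∀ u, f u = P.eval u)
    (hinj : Function.Injective f) :
    ∃ (c : k) (d : ℕ), c ≠ 0 ∧ ∀ u, f u = c * u ^ p ^ d := by
  have hker : ∀ u, f u = 0 → u = 0 := (injective_iff_map_eq_zero f).1 hinj
  have hP : P ≠ 0 := fun h => one_ne_zero <| hker 1 (by rw [hfP, h, eval_zero])
  have hf : ∀ u, f u = P.leadingCoeff * u ^ P.roots.card := fun u => by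
    rw [hfP, (IsAlgClosed.splits P).eval_eq_leadingCoeff_mul_pow
      (fun r hr => hker r (by rw [hfP]; exact isRoot_of_mem_roots hr))]
  have hc : P.leadingCoeff ≠ 0 := leadingCoeff_ne_zero.2 hP
  have hn : P.roots.card ≠ 0 := fun h => hc <| by
    simpa only [h, pow_zero, mul_one, map_zero] using (hf 0).symm
  obtain ⟨d, hd⟩ := (f.isAdditivePow_of_eq_mul_pow hc hf).exists_eq_pow p hn
  exact ⟨P.leadingCoeff, d, hc, by rwa [← hd]⟩
end

section
/- Let P be a finite p-group possessing a central series 1 = P_0 ≤ P_1 ≤ ... ≤ P_k = P of length k < p, such that each P_i is generated by elements of order dividing p. Then P has exponent p, i.e., x^p = 1 for every x ∈ P. -/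
/-!
For `x y` in a group `G`, the sequence `q n = y⁻ⁿ x⁻ⁿ (x y)ⁿ` is polynomial with respect to the
lower central series: its `j`-th forward difference takes values in `γ j`. Such sequences
are closed under products and commutators (Lazard), so the Newton expansion of `q`, which
vanishes at `0` and `1`, gives the Hall–Petrescu formula `q n = ∏_{i ≥ 2} c_i ^ (n choose i)` with
`c_i ∈ γ i`. If `G` has class `< p` and `[G, G]` has exponent `p`, each factor is trivial at
`n = p`, since `p ∣ (p choose i)` for `1 < i < p` and `γ p = 1`; hence `(x y)ᵖ = xᵖ yᵖ`.

Along the central series, `P_i` has class `≤ k < p` and `[P_i, P_i] ≤ P_{i-1}`, which has exponent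
`p` by induction. So the `p`-th power map is multiplicative on `P_i`, and `P_i` is generated by
elements it kills.
-/

open Subgroup

open scoped commutatorElement

section

variable {G : Type*} [Group G]

theorem Subgroup.commutator_commutator_le_of_rotate {A B C N : Subgroup G} [N.Normal]
    (h₁ : ⁅⁅B, C⁆, A⁆ ≤ N) (h₂ : ⁅⁅C, A⁆, B⁆ ≤ N) : ⁅⁅A, B⁆, C⁆ ≤ N := by
  let π := QuotientGroup.mk' N
  have hker : ∀ X : Subgroup G, X.map π = ⊥ ↔ X ≤ N := fun X => by
    rw [map_eq_bot_iff, QuotientGroup.ker_mk']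
  rw [← hker, map_commutator, map_commutator]
  apply commutator_commutator_eq_bot_of_rotate
  · rw [← map_commutator, ← map_commutator, hker]; exact h₁
  · rw [← map_commutator, ← map_commutator, hker]; exact h₂

theorem Subgroup.commutator_lowerCentralSeries_le (a b : ℕ) :
    ⁅(⊤ : Subgroup G).lowerCentralSeries a, (⊤ : Subgroup G).lowerCentralSeries b⁆ ≤
      (⊤ : Subgroup G).lowerCentralSeries (a + b + 1) := by
  induction b generalizing a with
  | zero => exact le_rfl
  | succ b ih =>
    rw [commutator_comm, lowerCentralSeries_succ, show a + (b + 1) + 1 = a + b + 1 + 1 by omega]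
    apply commutator_commutator_le_of_rotate
    · rw [commutator_comm ⊤, ← lowerCentralSeries_succ]
      simpa only [show a + 1 + b + 1 = a + b + 1 + 1 by omega] using ih (a + 1)
    · exact commutator_mono (ih a) le_rfl

namespace HallPetrescu

/-- The lower central series in the indexing `γ 1 = G`, `γ 2 = [G, G]`; truncated subtraction
also makes `γ 0 = G`. -/
def γ (G : Type*) [Group G] (i : ℕ) : Subgroup G := (⊤ : Subgroup G).lowerCentralSeries (i - 1)

theorem γ_antitone : Antitone (γ G) :=
  fun _ _ h => Subgroup.lowerCentralSeries_antitone _ (by omega)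

theorem commutator_γ_le (i j : ℕ) : ⁅γ G i, γ G j⁆ ≤ γ G (i + j) :=
  (commutator_lowerCentralSeries_le _ _).trans (Subgroup.lowerCentralSeries_antitone _ (by omega))

def diff (f : ℕ → G) : ℕ → G := fun n => f (n + 1) * (f n)⁻¹

theorem diff_one : diff (1 : ℕ → G) = 1 := by
  funext n; simp [diff]

theorem diff_mul (f g : ℕ → G) : diff (f * g) = diff f * ⁅f, diff g⁆ * diff g := by
  funext n
  simp only [diff, Pi.mul_apply, Pi.inv_apply, commutatorElement_def]
  group

theorem diff_commutator (f g : ℕ → G) :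
    diff ⁅f, g⁆ = diff f * ⁅f, diff g⁆ * (diff f)⁻¹ * ⁅diff f * diff g, ⁅f, g⁆⁆ *
      (⁅f, g⁆ * ⁅diff f, diff g * g⁆ * ⁅f, g⁆⁻¹) := by
  funext n
  simp only [diff, Pi.mul_apply, Pi.inv_apply, commutatorElement_def]
  group

def IsPolyUpTo (J s : ℕ) (f : ℕ → G) : Prop := ∀ j ≤ J, ∀ n, diff^[j] f n ∈ γ G (s + j)

def IsPoly (s : ℕ) (f : ℕ → G) : Prop := ∀ J, IsPolyUpTo J s f

variable {J J' s s' : ℕ} {f g : ℕ → G}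

theorem isPolyUpTo_zero_iff : IsPolyUpTo 0 s f ↔ ∀ n, f n ∈ γ G s := by
  simp [IsPolyUpTo]

theorem isPolyUpTo_succ_iff :
    IsPolyUpTo (J + 1) s f ↔ (∀ n, f n ∈ γ G s) ∧ IsPolyUpTo J (s + 1) (diff f) := by
  refine ⟨fun h => ⟨h 0 (Nat.zero_le _), fun j hj n => ?_⟩, fun ⟨h₀, h⟩ j hj n => ?_⟩
  · simpa [Function.iterate_succ_apply, Nat.add_right_comm, Nat.add_assoc] using
      h (j + 1) (by omega) n
  · cases j with
    | zero => exact h₀ n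
    | succ j =>
      simpa [Function.iterate_succ_apply, Nat.add_right_comm, Nat.add_assoc] using
        h j (by omega) n

theorem IsPolyUpTo.apply_mem (hf : IsPolyUpTo J s f) (n : ℕ) : f n ∈ γ G s :=
  hf 0 (Nat.zero_le _) n

theorem IsPolyUpTo.of_weight_le (hf : IsPolyUpTo J s f) (h : s' ≤ s) : IsPolyUpTo J s' f :=
  fun j hj n => γ_antitone (by omega) (hf j hj n)

theorem IsPolyUpTo.of_order_le (hf : IsPolyUpTo J s f) (h : J' ≤ J) : IsPolyUpTo J' s f :=
  fun j hj n => hf j (hj.trans h) n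

/- Products and commutators have to be treated together: the difference of a product involves a
commutator, and the difference of a commutator involves products and conjugates. -/
variable (G) in
def MulCommClosed (J : ℕ) : Prop :=
  (∀ s (f g : ℕ → G), IsPolyUpTo J s f → IsPolyUpTo J s g → IsPolyUpTo J s (f * g)) ∧
    ∀ a b (f g : ℕ → G), IsPolyUpTo J a f → IsPolyUpTo J b g → IsPolyUpTo J (a + b) ⁅f, g⁆

theorem mulCommClosed_zero : MulCommClosed G 0 := by
  simp only [MulCommClosed, isPolyUpTo_zero_iff]
  exact ⟨fun _ _ _ hf hg n => mul_mem (hf n) (hg n),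
    fun a b _ _ hf hg n => commutator_γ_le a b (commutator_mem_commutator (hf n) (hg n))⟩

theorem MulCommClosed.commutator_of_le (h : MulCommClosed G J) {a b c : ℕ}
    (hf : IsPolyUpTo J a f) (hg : IsPolyUpTo J b g) (hc : c ≤ a + b) :
    IsPolyUpTo J c ⁅f, g⁆ :=
  (h.2 a b f g hf hg).of_weight_le hc

theorem MulCommClosed.conj (h : MulCommClosed G J) {t σ : ℕ} {M N : ℕ → G}
    (hM : IsPolyUpTo J t M) (hN : IsPolyUpTo J σ N) : IsPolyUpTo J t (N * M * N⁻¹) := by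
  rw [show N * M * N⁻¹ = ⁅N, M⁆ * M by simp only [commutatorElement_def]; group]
  exact h.1 t _ _ (h.commutator_of_le hN hM (by omega)) hM

theorem MulCommClosed.succ_mul (h : MulCommClosed G J) (hf : IsPolyUpTo (J + 1) s f)
    (hg : IsPolyUpTo (J + 1) s g) : IsPolyUpTo (J + 1) s (f * g) := by
  have hfJ := hf.of_order_le J.le_succ
  rw [isPolyUpTo_succ_iff] at hf hg ⊢
  refine ⟨fun n => mul_mem (hf.1 n) (hg.1 n), ?_⟩
  rw [diff_mul]
  exact h.1 _ _ _ (h.1 _ _ _ hf.2 (h.commutator_of_le hfJ hg.2 (by omega))) hg.2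

theorem MulCommClosed.succ_commutator (h : MulCommClosed G J) {a b : ℕ}
    (hf : IsPolyUpTo (J + 1) a f) (hg : IsPolyUpTo (J + 1) b g) :
    IsPolyUpTo (J + 1) (a + b) ⁅f, g⁆ := by
  have hfJ := hf.of_order_le J.le_succ
  have hgJ := hg.of_order_le J.le_succ
  rw [isPolyUpTo_succ_iff] at hf hg ⊢
  obtain ⟨hf₀, hdf⟩ := hf
  obtain ⟨hg₀, hdg⟩ := hg
  refine ⟨fun n => commutator_γ_le a b (commutator_mem_commutator (hf₀ n) (hg₀ n)), ?_⟩
  have hfg := h.2 a b f g hfJ hgJ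
  have h₁ := h.conj (h.commutator_of_le hfJ hdg (c := a + b + 1) (by omega)) hdf
  have h₂ := h.commutator_of_le (c := a + b + 1)
    (h.1 1 _ _ (hdf.of_weight_le (by omega)) (hdg.of_weight_le (by omega))) hfg (by omega)
  have h₃ := h.conj (h.commutator_of_le (c := a + b + 1) hdf
    (h.1 b _ _ (hdg.of_weight_le (by omega)) hgJ) (by omega)) hfg
  rw [diff_commutator]
  exact h.1 _ _ _ (h.1 _ _ _ h₁ h₂) h₃

theorem mulCommClosed (J : ℕ) : MulCommClosed G J := by
  induction J with
  | zero => exact mulCommClosed_zero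
  | succ J h => exact ⟨fun _ _ _ => h.succ_mul, fun _ _ _ _ => h.succ_commutator⟩

theorem IsPoly.mul (hf : IsPoly s f) (hg : IsPoly s g) : IsPoly s (f * g) :=
  fun J => (mulCommClosed J).1 s f g (hf J) (hg J)

theorem IsPoly.apply_mem (hf : IsPoly s f) (n : ℕ) : f n ∈ γ G s :=
  (hf 0).apply_mem n

theorem IsPoly.isPoly_diff (hf : IsPoly s f) : IsPoly (s + 1) (diff f) :=
  fun J => (isPolyUpTo_succ_iff.1 (hf (J + 1))).2

theorem isPoly_one (s : ℕ) : IsPoly s (1 : ℕ → G) := by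
  intro J
  induction J generalizing s with
  | zero => exact isPolyUpTo_zero_iff.2 fun _ => one_mem _
  | succ J ih => exact isPolyUpTo_succ_iff.2 ⟨fun _ => one_mem _, by rw [diff_one]; exact ih _⟩

def binomPow (c : G) (k : ℕ) : ℕ → G := fun n => c ^ n.choose k

theorem diff_binomPow_zero (c : G) : diff (binomPow c 0) = 1 := by
  funext n; simp [diff, binomPow]

theorem diff_binomPow_succ (c : G) (k : ℕ) : diff (binomPow c (k + 1)) = binomPow c k := by
  funext n
  simp only [diff, binomPow, Nat.choose_succ_succ', pow_add]
  group

theorem isPoly_binomPow {c : G} {k : ℕ} (hc : c ∈ γ G (s + k)) : IsPoly s (binomPow c k) := by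
  intro J
  induction J generalizing s k with
  | zero => exact isPolyUpTo_zero_iff.2 fun n => γ_antitone (by omega) (pow_mem hc _)
  | succ J ih =>
    refine isPolyUpTo_succ_iff.2 ⟨fun n => γ_antitone (by omega) (pow_mem hc _), ?_⟩
    cases k with
    | zero => exact diff_binomPow_zero c ▸ isPoly_one _ J
    | succ k => exact diff_binomPow_succ c k ▸ ih (by rwa [Nat.add_right_comm])

theorem mem_of_diff_mem {H : Subgroup G} {r : ℕ → G} (h₀ : r 0 = 1)
    (hd : ∀ n, diff r n ∈ H) (n : ℕ) : r n ∈ H := by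
  induction n with
  | zero => exact h₀ ▸ one_mem H
  | succ n ih => simpa [diff] using mul_mem (hd n) ih

theorem IsPoly.mem_γ_of_eq_one {i : ℕ} {r : ℕ → G} (hr : IsPoly s r)
    (hv : ∀ m ≤ i, r m = 1) (n : ℕ) : r n ∈ γ G (s + i + 1) := by
  induction i generalizing s r n with
  | zero => exact mem_of_diff_mem (hv 0 le_rfl) hr.isPoly_diff.apply_mem n
  | succ i ih =>
    have hdv : ∀ m ≤ i, diff r m = 1 := fun m hm => by
      simp [diff, hv m (by omega), hv (m + 1) (by omega)]
    have := mem_of_diff_mem (hv 0 (by omega)) (fun n => ih hr.isPoly_diff hdv n) n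
    rwa [show s + 1 + i + 1 = s + (i + 1) + 1 by omega] at this

theorem IsPoly.apply_eq_one {p i : ℕ} (hpow : ∀ j, 2 ≤ j → ∀ c ∈ γ G j, c ^ p.choose j = 1)
    (hi : 1 ≤ i) {r : ℕ → G} (hr : IsPoly 0 r) (hv : ∀ m ≤ i, r m = 1) : r p = 1 := by
  -- Strip off the Newton term `binomPow (r (i + 1))⁻¹ (i + 1)`, which is trivial at `p`.
  obtain ⟨d, hd⟩ : ∃ d, p ≤ i + d := ⟨p, by omega⟩
  induction d generalizing i r with
  | zero => exact hv p hd
  | succ d ih =>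
    have hc : r (i + 1) ∈ γ G (i + 1) := by simpa using hr.mem_γ_of_eq_one hv (i + 1)
    have hc' : (r (i + 1))⁻¹ ∈ γ G (0 + (i + 1)) := by simpa using inv_mem hc
    have hv' : ∀ m ≤ i + 1, (r * binomPow (r (i + 1))⁻¹ (i + 1)) m = 1 := by
      intro m hm
      rcases hm.lt_or_eq with hm | rfl
      · simp [binomPow, hv m (by omega), Nat.choose_eq_zero_of_lt hm]
      · simp [binomPow]
    have := ih (by omega) (hr.mul (isPoly_binomPow hc')) hv' (by omega)
    simpa [binomPow, hpow (i + 1) (by omega) _ hc] using this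

theorem mul_pow_eq_of_lowerCentralSeries_eq_bot {p k : ℕ} (hp : p.Prime) (hk : k < p)
    (hclass : (⊤ : Subgroup G).lowerCentralSeries k = ⊥)
    (hcomm : ∀ g ∈ commutator G, g ^ p = 1) (x y : G) : (x * y) ^ p = x ^ p * y ^ p := by
  have hpow : ∀ i, 2 ≤ i → ∀ c ∈ γ G i, c ^ p.choose i = 1 := by
    intro i hi c hc
    rcases lt_or_ge i p with hip | hpi
    · obtain ⟨t, ht⟩ := hp.dvd_choose_self (by omega) hip
      rw [ht, pow_mul, hcomm c (γ_antitone hi hc), one_pow]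
    · have : c ∈ γ G (k + 1) := γ_antitone (by omega) hc
      rw [γ, Nat.add_sub_cancel, hclass, mem_bot] at this
      rw [this, one_pow]
  have hq : IsPoly 0 (binomPow y⁻¹ 1 * binomPow x⁻¹ 1 * binomPow (x * y) 1) :=
    ((isPoly_binomPow (mem_top _)).mul (isPoly_binomPow (mem_top _))).mul
      (isPoly_binomPow (mem_top _))
  have := hq.apply_eq_one hpow le_rfl fun m hm => by
    interval_cases m <;> simp [binomPow, mul_assoc]
  simp only [binomPow, Pi.mul_apply, Nat.choose_one_right, inv_pow] at this
  rw [← mul_inv_rev, inv_mul_eq_one] at this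
  exact this.symm

end HallPetrescu

theorem pow_eq_one_of_mem_closure {p k : ℕ} (hp : p.Prime) (hk : k < p)
    (hclass : (⊤ : Subgroup G).lowerCentralSeries k = ⊥) {H : Subgroup G} {S : Set G}
    (hH : H = closure S) (hS : ∀ s ∈ S, s ^ p = 1) (hcomm : ∀ g ∈ ⁅H, H⁆, g ^ p = 1) :
    ∀ x ∈ H, x ^ p = 1 := by
  have hclassH : (⊤ : Subgroup H).lowerCentralSeries k = ⊥ := by
    rw [← map_eq_bot_iff_of_injective _ H.subtype_injective, top_subtype_lowerCentralSeries,
      eq_bot_iff, ← hclass]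
    exact lowerCentralSeries_mono k le_top
  have hcommH : ∀ g ∈ commutator H, g ^ p = 1 := fun g hg => by
    have : (g : G) ∈ H.lowerCentralSeries 1 := by
      rw [← top_subtype_lowerCentralSeries]
      exact mem_map_of_mem _ hg
    exact Subtype.ext (by simpa using hcomm _ this)
  have hmul : ∀ x ∈ H, ∀ y ∈ H, (x * y) ^ p = x ^ p * y ^ p := fun x hx y hy => by
    simpa using congrArg Subtype.val
      (HallPetrescu.mul_pow_eq_of_lowerCentralSeries_eq_bot hp hk hclassH hcommH ⟨x, hx⟩ ⟨y, hy⟩)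
  intro x hx
  rw [hH] at hx
  induction hx using closure_induction with
  | mem x hx => exact hS x hx
  | one => exact one_pow p
  | mul x y hx hy ihx ihy => rw [hmul x (hH.ge hx) y (hH.ge hy), ihx, ihy, one_mul]
  | inv x _ ih => rw [inv_pow, ih, inv_one]

theorem Subgroup.lowerCentralSeries_eq_bot_of_central {k : ℕ} (C : Fin (k + 1) → Subgroup G)
    (hC0 : C 0 = ⊥) (hCk : C (Fin.last k) = ⊤)
    (hcentral : ∀ i : Fin k, ⁅(⊤ : Subgroup G), C i.succ⁆ ≤ C i.castSucc) :
    (⊤ : Subgroup G).lowerCentralSeries k = ⊥ := by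
  have h : ∀ i : Fin (k + 1), (⊤ : Subgroup G).lowerCentralSeries (k - i) ≤ C i := by
    refine Fin.reverseInduction (by simp [hCk]) fun i ih => ?_
    rw [show k - (i.castSucc : ℕ) = k - i.succ + 1 by simp; omega,
      Subgroup.lowerCentralSeries_succ, commutator_comm]
    exact (commutator_mono le_rfl ih).trans (hcentral i)
  simpa [hC0] using h 0

end

theorem stmt_10_general (p : ℕ) (hp : p.Prime) (P : Type*) [Group P] (k : ℕ) (hk : k < p)
    (C : Fin (k + 1) → Subgroup P)
    (hC0 : C 0 = ⊥) (hCk : C (Fin.last k) = ⊤)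
    (hcentral : ∀ i : Fin k, ⁅(⊤ : Subgroup P), C i.succ⁆ ≤ C i.castSucc)
    (hgen : ∀ i : Fin (k + 1), C i = Subgroup.closure {x : P | x ∈ C i ∧ x ^ p = 1}) :
    ∀ x : P, x ^ p = 1 := by
  have hclass := lowerCentralSeries_eq_bot_of_central C hC0 hCk hcentral
  have hexp : ∀ i, ∀ x ∈ C i, x ^ p = 1 := by
    refine Fin.induction (by simp [hC0]) fun i ih => ?_
    refine pow_eq_one_of_mem_closure hp hk hclass (hgen i.succ) (fun _ hs => hs.2) fun g hg => ?_
    exact ih g (hcentral i (commutator_mono le_top le_rfl hg))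
  exact fun x => hexp (Fin.last k) x (hCk ▸ mem_top x)

/-- Hall's exponent lemma: a finite `p`-group with a central series of length `k < p`,
each of whose terms is generated by elements of order dividing `p`, has exponent `p`. -/
theorem stmt_10 (p : ℕ) (hp : p.Prime) (P : Type*) [Group P] [Finite P]
    (hP : IsPGroup p P) (k : ℕ) (hk : k < p)
    (C : Fin (k + 1) → Subgroup P)
    (hC0 : C 0 = ⊥) (hCk : C (Fin.last k) = ⊤)
    (hcentral : ∀ i : Fin k, ⁅(⊤ : Subgroup P), C i.succ⁆ ≤ C i.castSucc)
    (hgen : ∀ i : Fin (k + 1), C i = Subgroup.closure {x : P | x ∈ C i ∧ x ^ p = 1}) :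
    ∀ x : P, x ^ p = 1 :=
  stmt_10_general p hp P k hk C hC0 hCk hcentral hgen
end

section
/- Let A and B be vector spaces over a field, each equipped with a finite filtration 0 = A_0 ≤ A_1 ≤ ... ≤ A_n = A and 0 = B_0 ≤ B_1 ≤ ... ≤ B_n = B, and let f : A → B be a linear map with f(A_i) ⊆ B_i for all i. Then dim ker(f) ≤ dim ker(gr f), where gr f : ⊕_i A_i/A_{i-1} → ⊕_i B_i/B_{i-1} is the induced map on associated graded spaces. -/
/-!
Put `Kᵢ = ker f ⊓ Aᵢ`. The map `Kᵢ₊₁ → Aᵢ₊₁ ⧸ Aᵢ` has kernel inside `Kᵢ` and lands in `ker gᵢ`,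
so `dim Kᵢ₊₁ ≤ dim Kᵢ + dim ker gᵢ`; telescoping from `K₀ = 0` to `Kₙ = ker f` gives the bound.
-/

theorem Fin.le_sum_of_le_add {M : Type*} [AddCommMonoid M] [PartialOrder M]
    [IsOrderedAddMonoid M] {n : ℕ} (r : Fin (n + 1) → M) (d : Fin n → M) (h0 : r 0 ≤ 0)
    (hstep : ∀ i : Fin n, r i.succ ≤ r i.castSucc + d i) :
    r (Fin.last n) ≤ ∑ i, d i := by
  induction n with
  | zero => exact h0
  | succ n ih =>
    have hprefix := ih (fun j => r j.castSucc) (fun i => d i.castSucc) h0 fun i => by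
      simpa only [Fin.succ_castSucc] using hstep i.castSucc
    rw [Fin.sum_univ_castSucc]
    exact (hstep (Fin.last n)).trans (add_le_add_left hprefix _)

namespace Submodule

variable {F A : Type*} [DivisionRing F] [AddCommGroup A] [Module F A]

theorem rank_inf_le_rank_inf_add_rank (K S T : Submodule F A)
    (W : Submodule F (T ⧸ S.comap T.subtype))
    (hW : ∀ a ∈ K, ∀ haT : a ∈ T, Quotient.mk ⟨a, haT⟩ ∈ W) :
    Module.rank F ↥(K ⊓ T) ≤ Module.rank F ↥(K ⊓ S) + Module.rank F W := by
  set φ : ↥(K ⊓ T) →ₗ[F] T ⧸ S.comap T.subtype :=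
    (S.comap T.subtype).mkQ ∘ₗ inclusion inf_le_right
  have hrange : Module.rank F (LinearMap.range φ) ≤ Module.rank F W :=
    rank_mono <| LinearMap.range_le_iff_comap.mpr <| eq_top_iff.mpr
      fun x _ => hW x x.2.1 x.2.2
  have hker : Module.rank F (LinearMap.ker φ) ≤ Module.rank F ↥(K ⊓ S) := by
    refine LinearMap.rank_le_of_injective
      (LinearMap.codRestrict (K ⊓ S) ((K ⊓ T).subtype ∘ₗ (LinearMap.ker φ).subtype)
        fun x => ⟨x.1.2.1, ?_⟩) fun x y hxy => ?_
    · exact (Quotient.mk_eq_zero (S.comap T.subtype)).mp x.2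
    · exact Subtype.ext <| Subtype.ext (congrArg Subtype.val hxy :)
  calc Module.rank F ↥(K ⊓ T)
      = Module.rank F (LinearMap.range φ) + Module.rank F (LinearMap.ker φ) :=
        (LinearMap.rank_range_add_rank_ker φ).symm
    _ ≤ Module.rank F ↥(K ⊓ S) + Module.rank F W := by
        rw [add_comm]; exact add_le_add hker hrange

end Submodule

theorem stmt_11_general (F : Type*) [Field F] (A B : Type*) [AddCommGroup A] [Module F A]
    [AddCommGroup B] [Module F B] (n : ℕ)
    (A' : Fin (n + 1) → Submodule F A) (B' : Fin (n + 1) → Submodule F B)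
    (hA0 : A' 0 = ⊥) (hAn : A' (Fin.last n) = ⊤)
    (f : A →ₗ[F] B) (hf : ∀ i : Fin (n + 1), ∀ a ∈ A' i, f a ∈ B' i)
    (g : ∀ i : Fin n,
      (↥(A' i.succ) ⧸ (A' i.castSucc).comap (A' i.succ).subtype) →ₗ[F]
      (↥(B' i.succ) ⧸ (B' i.castSucc).comap (B' i.succ).subtype))
    (hg : ∀ (i : Fin n) (a : A' i.succ),
      g i (Submodule.Quotient.mk a) =
        Submodule.Quotient.mk (⟨f a, hf i.succ a a.2⟩ : B' i.succ)) :
    Module.rank F (LinearMap.ker f) ≤ ∑ i : Fin n, Module.rank F (LinearMap.ker (g i)) := by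
  have hstep (i : Fin n) :
      Module.rank F ↥(LinearMap.ker f ⊓ A' i.succ) ≤
        Module.rank F ↥(LinearMap.ker f ⊓ A' i.castSucc) + Module.rank F (LinearMap.ker (g i)) :=
    Submodule.rank_inf_le_rank_inf_add_rank _ _ _ _ fun a ha haT => by
      rw [LinearMap.mem_ker, hg, Submodule.Quotient.mk_eq_zero]
      simp [LinearMap.mem_ker.mp ha]
  have hlast := Fin.le_sum_of_le_add (fun j => Module.rank F ↥(LinearMap.ker f ⊓ A' j))
    _ (by simp [hA0]) hstep
  rwa [hAn, inf_top_eq] at hlast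

/-- For a filtration-preserving linear map `f : A → B` between finitely filtered vector
spaces, `dim ker f ≤ dim ker (gr f)`, where `gr f` is the induced map on associated graded
spaces (so its kernel's dimension is the sum of the dimensions of the kernels of the maps
`g i : A_{i+1}/A_i → B_{i+1}/B_i` induced by `f`). -/
theorem stmt_11 (F : Type*) [Field F] (A B : Type*) [AddCommGroup A] [Module F A]
    [AddCommGroup B] [Module F B] (n : ℕ)
    (A' : Fin (n + 1) → Submodule F A) (B' : Fin (n + 1) → Submodule F B)
    (hAmono : Monotone A') (hBmono : Monotone B')
    (hA0 : A' 0 = ⊥) (hAn : A' (Fin.last n) = ⊤)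
    (hB0 : B' 0 = ⊥) (hBn : B' (Fin.last n) = ⊤)
    (f : A →ₗ[F] B) (hf : ∀ i : Fin (n + 1), ∀ a ∈ A' i, f a ∈ B' i)
    (g : ∀ i : Fin n,
      (↥(A' i.succ) ⧸ (A' i.castSucc).comap (A' i.succ).subtype) →ₗ[F]
      (↥(B' i.succ) ⧸ (B' i.castSucc).comap (B' i.succ).subtype))
    (hg : ∀ (i : Fin n) (a : A' i.succ),
      g i (Submodule.Quotient.mk a) =
        Submodule.Quotient.mk (⟨f a, hf i.succ a a.2⟩ : B' i.succ)) :
    Module.rank F (LinearMap.ker f) ≤ ∑ i : Fin n, Module.rank F (LinearMap.ker (g i)) :=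
  stmt_11_general F A B n A' B' hA0 hAn f hf g hg
end

section
/- Let p be an odd prime and r ≥ 1. Suppose a_0,...,a_{r-1} ∈ ℕ and e_0,...,e_{r-1} ∈ {0,1}, not all zero, satisfy (p^r - 1) divides Σ_k p^k (a_k + e_k). Then Σ_k (e_k + 2 a_k) ≥ r(2p - 3). Moreover, if equality holds then e_k = 1 and a_k = p - 2 for all k. -/
/-!
Put `b k = a k + e k` and `N = p ^ r - 1`, and let `M j = ∑ k, p ^ ((k + j) % r) * b k` be the
value of the digits `b` cyclically rotated by `j`. Rotating once more multiplies by `p` up to the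
digit that wraps around: `p * M j = M (j + 1) + N * b (r - 1 - j)`. Hence every `M j` is a positive
multiple of `N`, so `M j ≥ N`, and summing over `j` gives
`(∑ k, b k) * (1 + p + ⋯ + p ^ (r - 1)) ≥ r * N`, i.e. `∑ k, b k ≥ r * (p - 1)`. Since
`∑ (e k + 2 * a k) = 2 * ∑ b k - ∑ e k` and `e k ≤ 1`, the bound follows. In the equality case
every `M j = N`, and the recurrence then reads `p * N = N + N * b k`.
-/

open Finset

section RotatedValue

variable {n : ℕ} (p : ℕ) (b : Fin (n + 1) → ℕ)

def rotatedValue (j : Fin (n + 1)) : ℕ :=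
  ∑ k, p ^ ((k + j : Fin (n + 1)) : ℕ) * b k

lemma rotatedValue_zero : rotatedValue p b 0 = ∑ k : Fin (n + 1), p ^ (k : ℕ) * b k := by
  simp [rotatedValue]

lemma mul_rotatedValue_add (j : Fin (n + 1)) :
    p * rotatedValue p b j + b (Fin.last n - j) =
      rotatedValue p b (j + 1) + p ^ (n + 1) * b (Fin.last n - j) := by
  have hsingle : b (Fin.last n - j) = ∑ k, if k + j = Fin.last n then b k else 0 := by
    simp_rw [← eq_sub_iff_add_eq, sum_ite_eq', mem_univ, if_true]
  rw [hsingle, rotatedValue, rotatedValue, mul_sum, mul_sum, ← sum_add_distrib,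
    ← sum_add_distrib]
  refine sum_congr rfl fun k _ => ?_
  rw [← add_assoc, Fin.val_add_one]
  split_ifs with h
  · simp only [h, Fin.val_last, pow_zero]
    ring
  · ring

lemma sum_rotatedValue :
    ∑ j, rotatedValue p b j = (∑ i : Fin (n + 1), p ^ (i : ℕ)) * ∑ k, b k := by
  rw [mul_sum]
  simp_rw [rotatedValue]
  rw [sum_comm]
  refine sum_congr rfl fun k _ => ?_
  rw [← sum_mul]
  congr 1
  exact Fintype.sum_equiv (Equiv.addLeft k) _ _ fun _ => rfl

variable {p}

lemma sum_const_pow_sub_one (hp : 1 < p) :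
    ∑ _j : Fin (n + 1), (p ^ (n + 1) - 1) =
      (∑ i : Fin (n + 1), p ^ (i : ℕ)) * ((n + 1) * (p - 1)) := by
  rw [sum_const, card_univ, Fintype.card_fin, smul_eq_mul, Fin.sum_univ_eq_sum_range (p ^ ·),
    Nat.geomSum_eq hp, mul_left_comm, Nat.div_mul_cancel (Nat.sub_one_dvd_pow_sub_one p _)]

lemma mul_rotatedValue (hp : 0 < p) (j : Fin (n + 1)) :
    p * rotatedValue p b j =
      rotatedValue p b (j + 1) + (p ^ (n + 1) - 1) * b (Fin.last n - j) := by
  have h := mul_rotatedValue_add p b j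
  have hpow : 1 ≤ p ^ (n + 1) := Nat.one_le_pow _ _ hp
  zify [hpow] at h ⊢
  linear_combination h

lemma rotatedValue_pos (hp : 0 < p) (hb : b ≠ 0) (j : Fin (n + 1)) : 0 < rotatedValue p b j := by
  obtain ⟨k, hk⟩ := Function.ne_iff.mp hb
  exact (Nat.mul_pos (pow_pos hp _) (Nat.pos_of_ne_zero hk)).trans_le
    (single_le_sum (f := fun i => p ^ ((i + j : Fin (n + 1)) : ℕ) * b i)
      (fun i _ => Nat.zero_le _) (mem_univ k))

variable {b}

lemma dvd_rotatedValue (hp : 0 < p) (h : p ^ (n + 1) - 1 ∣ rotatedValue p b 0)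
    (j : Fin (n + 1)) : p ^ (n + 1) - 1 ∣ rotatedValue p b j := by
  induction j using Fin.induction with
  | zero => exact h
  | succ i ih =>
    rw [← Fin.coeSucc_eq_succ]
    have hmul := mul_rotatedValue b hp i.castSucc
    exact (Nat.dvd_add_left (dvd_mul_right _ _)).mp (hmul ▸ dvd_mul_of_dvd_right ih p)

lemma pow_sub_one_le_rotatedValue (hp : 0 < p) (hb : b ≠ 0)
    (h : p ^ (n + 1) - 1 ∣ rotatedValue p b 0) (j : Fin (n + 1)) :
    p ^ (n + 1) - 1 ≤ rotatedValue p b j :=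
  Nat.le_of_dvd (rotatedValue_pos b hp hb j) (dvd_rotatedValue hp h j)

lemma succ_mul_sub_one_le_sum (hp : 1 < p) (hb : b ≠ 0)
    (h : p ^ (n + 1) - 1 ∣ rotatedValue p b 0) : (n + 1) * (p - 1) ≤ ∑ k, b k := by
  have hp0 : 0 < p := by omega
  have hG : 0 < ∑ i : Fin (n + 1), p ^ (i : ℕ) :=
    sum_pos (fun _ _ => pow_pos hp0 _) univ_nonempty
  refine Nat.le_of_mul_le_mul_left ?_ hG
  calc _ = ∑ _j : Fin (n + 1), (p ^ (n + 1) - 1) := (sum_const_pow_sub_one hp).symm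
    _ ≤ ∑ j, rotatedValue p b j :=
      sum_le_sum fun j _ => pow_sub_one_le_rotatedValue hp0 hb h j
    _ = _ := sum_rotatedValue p b

lemma eq_sub_one_of_sum_eq (hp : 1 < p) (hb : b ≠ 0)
    (h : p ^ (n + 1) - 1 ∣ rotatedValue p b 0) (hsum : ∑ k, b k = (n + 1) * (p - 1))
    (k : Fin (n + 1)) : b k = p - 1 := by
  have hp0 : 0 < p := by omega
  have hR : ∀ j, p ^ (n + 1) - 1 = rotatedValue p b j := by
    have hle : ∀ j ∈ univ, p ^ (n + 1) - 1 ≤ rotatedValue p b j :=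
      fun j _ => pow_sub_one_le_rotatedValue hp0 hb h j
    simpa using (sum_eq_sum_iff_of_le hle).mp
      (by rw [sum_const_pow_sub_one hp, sum_rotatedValue, hsum])
  have hrec := mul_rotatedValue b hp0 (Fin.last n - k)
  rw [sub_sub_cancel, ← hR, ← hR] at hrec
  have hN : 0 < p ^ (n + 1) - 1 := Nat.sub_pos_of_lt (Nat.one_lt_pow n.succ_ne_zero hp)
  have hpb := Nat.eq_of_mul_eq_mul_left hN (show (p ^ (n + 1) - 1) * p = _ * (1 + b k) by linarith)
  omega

end RotatedValue

theorem stmt_14_general (p r : ℕ) (hp : p.Prime) (hr : 1 ≤ r)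
    (a e : Fin r → ℕ) (he : ∀ k, e k ≤ 1)
    (hne : ∃ k, a k ≠ 0 ∨ e k ≠ 0)
    (hdvd : (p ^ r - 1) ∣ ∑ k : Fin r, p ^ (k : ℕ) * (a k + e k)) :
    r * (2 * p - 3) ≤ ∑ k, (e k + 2 * a k) ∧
      (∑ k, (e k + 2 * a k) = r * (2 * p - 3) → ∀ k, e k = 1 ∧ a k = p - 2) := by
  obtain ⟨n, rfl⟩ : ∃ n, r = n + 1 := ⟨r - 1, by omega⟩
  have hp1 := hp.one_lt
  set b : Fin (n + 1) → ℕ := fun k => a k + e k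
  have hb : b ≠ 0 := by
    obtain ⟨k, hk⟩ := hne
    exact Function.ne_iff.mpr ⟨k, by simp only [b, Pi.zero_apply]; omega⟩
  have h0 : p ^ (n + 1) - 1 ∣ rotatedValue p b 0 := by rwa [rotatedValue_zero]
  have hS := succ_mul_sub_one_le_sum hp1 hb h0
  have hTE : ∑ k, (e k + 2 * a k) + ∑ k, e k = 2 * ∑ k, b k := by
    rw [← sum_add_distrib, mul_sum]
    exact sum_congr rfl fun k _ => by ring
  have hE : ∑ k, e k ≤ ∑ _k : Fin (n + 1), 1 := sum_le_sum fun k _ => he k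
  rw [sum_const, card_univ, Fintype.card_fin, smul_eq_mul, mul_one] at hE
  have hsub : (n + 1) * (2 * p - 3) + (n + 1) = 2 * ((n + 1) * (p - 1)) := by
    rw [← mul_add_one, mul_left_comm]; congr 2; omega
  refine ⟨by linarith, fun heq k => ?_⟩
  have he1 : ∀ k ∈ univ, e k = 1 := by
    refine (sum_eq_sum_iff_of_le fun k _ => he k).mp ?_
    simp only [sum_const, card_univ, Fintype.card_fin, smul_eq_mul, mul_one]
    linarith
  have hbk := eq_sub_one_of_sum_eq hp1 hb h0 (by linarith) k
  have hek := he1 k (mem_univ k)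
  simp only [b] at hbk
  omega

/-- If `p` is an odd prime, `a_k ∈ ℕ` and `e_k ∈ {0,1}`, not all zero, with
`p^r - 1` dividing `∑ p^k (a_k + e_k)`, then `∑ (e_k + 2 a_k) ≥ r (2p - 3)`,
with equality forcing `e_k = 1` and `a_k = p - 2` for all `k`. -/
theorem stmt_14 (p r : ℕ) (hp : p.Prime) (hodd : Odd p) (hr : 1 ≤ r)
    (a e : Fin r → ℕ) (he : ∀ k, e k ≤ 1)
    (hne : ∃ k, a k ≠ 0 ∨ e k ≠ 0)
    (hdvd : (p ^ r - 1) ∣ ∑ k : Fin r, p ^ (k : ℕ) * (a k + e k)) :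
    r * (2 * p - 3) ≤ ∑ k, (e k + 2 * a k) ∧
      (∑ k, (e k + 2 * a k) = r * (2 * p - 3) → ∀ k, e k = 1 ∧ a k = p - 2) :=
  stmt_14_general p r hp hr a e he hne hdvd
end

section
/- Let p be an odd prime and r ≥ 1. Suppose a_0,...,a_{r-1} ∈ ℕ and e_0,...,e_{r-1} ∈ {0,1}, not all zero, satisfy ((p^r - 1)/2) divides Σ_k p^k (a_k + e_k). Then Σ_k (e_k + 2 a_k) ≥ r(p - 2), with equality forcing e_k = 1 and a_k = (p-3)/2 for all k. -/
/-!
Put `c_k = 2 (a_k + e_k)`; then `p^r - 1 ∣ ∑ p^k c_k`, and the claim follows from the fact that a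
nonzero `c : Fin r → ℕ` with `b^r - 1 ∣ ∑ b^k c_k` has `∑ c_k ≥ r (b - 1)`, with equality only if
every `c_k = b - 1`. As `b^r ≡ 1 [MOD b^r - 1]`, a cyclic carry (take `b` from `c_k`, add `1` to
`c_{k+1 mod r}`) keeps the divisibility and lowers `∑ c_k` by `b - 1`. Once all `c_k < b`,
`∑ b^k c_k` is a positive multiple of `b^r - 1` and at most `b^r - 1`, so all `c_k = b - 1`.
-/

open Finset

def digitValue (b : ℕ) {r : ℕ} (c : Fin r → ℕ) : ℕ := ∑ k : Fin r, b ^ (k : ℕ) * c k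

section CyclicCarry

variable {b r : ℕ}

lemma digitValue_add (c d : Fin r → ℕ) :
    digitValue b (c + d) = digitValue b c + digitValue b d := by
  simp only [digitValue, Pi.add_apply, mul_add, sum_add_distrib]

lemma digitValue_single (k : Fin r) (x : ℕ) :
    digitValue b (Pi.single k x) = b ^ (k : ℕ) * x := by
  simp [digitValue, Pi.single_apply]

lemma digitValue_const_pred (hb : 1 ≤ b) : digitValue b (fun _ : Fin r ↦ b - 1) = b ^ r - 1 := by
  rw [digitValue, ← sum_mul, Fin.sum_univ_eq_sum_range (b ^ ·), geom_sum_mul_of_one_le hb]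

lemma digitValue_pos (hb : 1 ≤ b) {c : Fin r → ℕ} (hc : ∃ k, c k ≠ 0) : 0 < digitValue b c := by
  obtain ⟨k, hk⟩ := hc
  exact sum_pos' (fun _ _ ↦ Nat.zero_le _) ⟨k, mem_univ k, by positivity⟩

lemma sum_add_single {ι : Type*} [Fintype ι] [DecidableEq ι] (d : ι → ℕ) (k : ι) (x : ℕ) :
    ∑ j, (d + Pi.single k x : ι → ℕ) j = ∑ j, d j + x := by
  simp [sum_add_distrib]

lemma exists_eq_add_single {ι : Type*} [DecidableEq ι] {c : ι → ℕ} {k : ι} {x : ℕ}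
    (hk : x ≤ c k) : ∃ d : ι → ℕ, c = d + Pi.single k x := by
  refine ⟨Function.update c k (c k - x), funext fun j ↦ ?_⟩
  rcases eq_or_ne j k with rfl | hj
  · simp [hk]
  · simp [hj]

lemma pow_finRotate {M : Type*} [Monoid M] {x : M} (hx : x ^ r = 1) (k : Fin r) :
    x ^ (finRotate r k : ℕ) = x ^ ((k : ℕ) + 1) := by
  obtain ⟨n, rfl⟩ : ∃ n, r = n + 1 := Nat.exists_eq_succ_of_ne_zero k.pos.ne'
  rw [coe_finRotate]
  split_ifs with h
  · simp [h, hx]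
  · rfl

lemma eq_pred_of_lt_of_dvd (hb : 1 ≤ b) {c : Fin r → ℕ} (hlt : ∀ k, c k < b)
    (hne : ∃ k, c k ≠ 0) (hdvd : b ^ r - 1 ∣ digitValue b c) : ∀ k, c k = b - 1 := by
  have hle : ∀ k ∈ (univ : Finset (Fin r)), b ^ (k : ℕ) * c k ≤ b ^ (k : ℕ) * (b - 1) :=
    fun k _ ↦ Nat.mul_le_mul_left _ (Nat.le_pred_of_lt (hlt k))
  have hval : digitValue b c = b ^ r - 1 :=
    le_antisymm (digitValue_const_pred hb ▸ sum_le_sum hle)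
      (Nat.le_of_dvd (digitValue_pos hb hne) hdvd)
  rw [← digitValue_const_pred hb, digitValue, digitValue, sum_eq_sum_iff_of_le hle] at hval
  exact fun k ↦ Nat.eq_of_mul_eq_mul_left (by positivity) (hval k (mem_univ k))

lemma dvd_digitValue_carry (hb : 1 ≤ b) (d : Fin r → ℕ) (k : Fin r)
    (hdvd : b ^ r - 1 ∣ digitValue b (d + Pi.single k b)) :
    b ^ r - 1 ∣ digitValue b (d + Pi.single (finRotate r k) 1) := by
  have hbr : (b : ZMod (b ^ r - 1)) ^ r = 1 := by
    have h := ZMod.natCast_self (b ^ r - 1)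
    rw [Nat.cast_sub (Nat.one_le_pow _ _ hb)] at h
    push_cast at h
    exact sub_eq_zero.mp h
  rw [← ZMod.natCast_eq_zero_iff, digitValue_add, digitValue_single] at hdvd ⊢
  push_cast at hdvd ⊢
  rwa [mul_one, pow_finRotate hbr, pow_succ]

theorem mul_pred_le_sum_of_dvd (hb : 2 ≤ b) (c : Fin r → ℕ) (hne : ∃ k, c k ≠ 0)
    (hdvd : b ^ r - 1 ∣ digitValue b c) : r * (b - 1) ≤ ∑ k, c k := by
  induction hs : ∑ k, c k using Nat.strong_induction_on generalizing c with
  | _ n ih =>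
  by_cases hlt : ∀ k, c k < b
  · simp [← hs, eq_pred_of_lt_of_dvd (by omega) hlt hne hdvd]
  · push Not at hlt
    obtain ⟨k, hk⟩ := hlt
    obtain ⟨d, rfl⟩ := exists_eq_add_single hk
    rw [sum_add_single] at hs
    have := ih _ (by omega) (d + Pi.single (finRotate r k) 1) ⟨finRotate r k, by simp⟩
      (dvd_digitValue_carry (by omega) d k hdvd) (sum_add_single _ _ _)
    omega

theorem eq_pred_of_sum_eq_mul_pred (hb : 2 ≤ b) {c : Fin r → ℕ} (hne : ∃ k, c k ≠ 0)
    (hdvd : b ^ r - 1 ∣ digitValue b c) (hsum : ∑ k, c k = r * (b - 1)) :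
    ∀ k, c k = b - 1 := by
  refine eq_pred_of_lt_of_dvd (by omega) (fun k ↦ ?_) hne hdvd
  by_contra! hk
  obtain ⟨d, rfl⟩ := exists_eq_add_single hk
  have := mul_pred_le_sum_of_dvd hb _ ⟨finRotate r k, by simp⟩
    (dvd_digitValue_carry (by omega) d k hdvd)
  rw [sum_add_single] at this hsum
  omega

end CyclicCarry

theorem stmt_15_general (p r : ℕ) (hp : p.Prime) (hodd : Odd p)
    (a e : Fin r → ℕ) (he : ∀ k, e k ≤ 1)
    (hne : ∃ k, a k ≠ 0 ∨ e k ≠ 0)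
    (hdvd : ((p ^ r - 1) / 2) ∣ ∑ k : Fin r, p ^ (k : ℕ) * (a k + e k)) :
    r * (p - 2) ≤ ∑ k, (e k + 2 * a k) ∧
      (∑ k, (e k + 2 * a k) = r * (p - 2) → ∀ k, e k = 1 ∧ a k = (p - 3) / 2) := by
  set c : Fin r → ℕ := fun k ↦ 2 * (a k + e k)
  have hc_ne : ∃ k, c k ≠ 0 := hne.imp fun k hk ↦ show 2 * (a k + e k) ≠ 0 by omega
  have hc_dvd : p ^ r - 1 ∣ digitValue p c := by
    rw [← Nat.two_mul_div_two_of_even (Nat.Odd.sub_odd hodd.pow odd_one)]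
    have hval : digitValue p c = 2 * ∑ k : Fin r, p ^ (k : ℕ) * (a k + e k) := by
      rw [digitValue, mul_sum]
      exact sum_congr rfl fun k _ ↦ mul_left_comm _ _ _
    exact hval ▸ mul_dvd_mul_left 2 hdvd
  have hc_sum : ∑ k, c k = ∑ k, (e k + 2 * a k) + ∑ k, e k := by
    rw [← sum_add_distrib]
    exact sum_congr rfl fun k _ ↦ by ring
  have he_sum : ∑ k, e k ≤ r := by simpa using sum_le_sum fun k (_ : k ∈ univ) ↦ he k
  have hr_pred : r * (p - 1) = r * (p - 2) + r := by
    rw [← mul_add_one]; congr 1; have := hp.two_le; omega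
  have hlow := mul_pred_le_sum_of_dvd hp.two_le c hc_ne hc_dvd
  refine ⟨by omega, fun heq k ↦ ?_⟩
  have he_sum_eq : ∑ k, e k = ∑ _k : Fin r, 1 := by simpa using (by omega : ∑ k, e k = r)
  have hek : e k = 1 := (sum_eq_sum_iff_of_le fun k _ ↦ he k).mp he_sum_eq k (mem_univ k)
  have hck : 2 * (a k + e k) = p - 1 :=
    eq_pred_of_sum_eq_mul_pred hp.two_le hc_ne hc_dvd (by omega) k
  omega

/-- If `p` is an odd prime, `a_k ∈ ℕ` and `e_k ∈ {0,1}`, not all zero, with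
`(p^r - 1)/2` dividing `∑ p^k (a_k + e_k)`, then `∑ (e_k + 2 a_k) ≥ r (p - 2)`,
with equality forcing `e_k = 1` and `a_k = (p - 3)/2` for all `k`. -/
theorem stmt_15 (p r : ℕ) (hp : p.Prime) (hodd : Odd p) (hr : 1 ≤ r)
    (a e : Fin r → ℕ) (he : ∀ k, e k ≤ 1)
    (hne : ∃ k, a k ≠ 0 ∨ e k ≠ 0)
    (hdvd : ((p ^ r - 1) / 2) ∣ ∑ k : Fin r, p ^ (k : ℕ) * (a k + e k)) :
    r * (p - 2) ≤ ∑ k, (e k + 2 * a k) ∧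
      (∑ k, (e k + 2 * a k) = r * (p - 2) → ∀ k, e k = 1 ∧ a k = (p - 3) / 2) :=
  stmt_15_general p r hp hodd a e he hne hdvd
end

section
/- Let Φ be a reduced crystallographic root system with weight lattice Λ ⊇ ℤΦ. If a root α ∈ Φ is divisible in Λ, i.e., α = m·β for some integer m > 1 and β ∈ Λ, then the irreducible component of Φ containing α has type C_n, α is a long root, and m = 2. -/
/-!
If `α = m β` with `β` a weight, then `⟨β, α^∨⟩ = 2 / m` is an integer, so `m = 2`. Call a root
`γ` divisible if `γ / 2` is a weight. For a root `δ` not orthogonal to a divisible `γ`, the integers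
`⟨γ / 2, δ^∨⟩` and `⟨δ, γ^∨⟩` have product `2 ⟪γ, δ⟫² / (|γ|² |δ|²) ∈ (0, 2]`, so by
Cauchy–Schwarz and reducedness either `δ = ±γ`, or `|γ|² = 2 |δ|²` and `⟨δ, γ^∨⟩ = ±1`. Hence
distinct divisible roots (up to sign) are orthogonal, and in the second case `γ ∓ 2δ` is again
divisible, of the same length, and orthogonal to `γ`. So the divisible roots of length `|α|` in the
component of `α` are the `±2 e_a` for an orthogonal family `e_a` of equal length, and following
chains of non-orthogonal roots shows that every root of the component is `±2 e_a` or `±e_a ± e_b`.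
Reflections make "`a = b` or `e_a + e_b` is a root" an equivalence relation, and its class through
`α` contains every index, so all the `±e_a ± e_b` are roots of the component.
-/

open scoped RealInnerProductSpace

section RootSets

variable {V : Type*} [NormedAddCommGroup V] [InnerProductSpace ℝ V]

structure IsReducedRootSet (Φ : Set V) : Prop where
  zero_notMem : (0 : V) ∉ Φ
  sub_smul_mem : ∀ α ∈ Φ, ∀ β ∈ Φ, β - (2 * ⟪β, α⟫ / ⟪α, α⟫) • α ∈ Φ
  exists_int_eq : ∀ α ∈ Φ, ∀ β ∈ Φ, ∃ z : ℤ, 2 * ⟪β, α⟫ / ⟪α, α⟫ = z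
  eq_one_or_eq_neg_one : ∀ α ∈ Φ, ∀ c : ℝ, c • α ∈ Φ → c = 1 ∨ c = -1

def weightLattice (Φ : Set V) : AddSubgroup V where
  carrier := {β | ∀ γ ∈ Φ, ∃ z : ℤ, 2 * ⟪β, γ⟫ / ⟪γ, γ⟫ = z}
  add_mem' {β β'} hβ hβ' γ hγ := by
    obtain ⟨z, hz⟩ := hβ γ hγ
    obtain ⟨z', hz'⟩ := hβ' γ hγ
    exact ⟨z + z', by rw [inner_add_left, mul_add, add_div, hz, hz']; push_cast; ring⟩
  zero_mem' _ _ := ⟨0, by simp⟩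
  neg_mem' {β} hβ γ hγ := by
    obtain ⟨z, hz⟩ := hβ γ hγ
    exact ⟨-z, by rw [inner_neg_left, mul_neg, neg_div, hz]; push_cast; ring⟩

def RootsAdj (Φ : Set V) (u v : V) : Prop := u ∈ Φ ∧ v ∈ Φ ∧ ⟪u, v⟫ ≠ 0

def rootComponent (Φ : Set V) (α : V) : Set V :=
  {γ ∈ Φ | Relation.ReflTransGen (RootsAdj Φ) α γ}

def longDivisibleRoots (Φ : Set V) (α : V) : Set V :=
  {γ ∈ rootComponent Φ α | ⟪γ, γ⟫ = ⟪α, α⟫ ∧ (2⁻¹ : ℝ) • γ ∈ weightLattice Φ}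

lemma mem_rootComponent_of_inner_ne_zero {Φ : Set V} {α γ δ : V} (hγ : γ ∈ rootComponent Φ α)
    (hδ : δ ∈ Φ) (h : ⟪γ, δ⟫ ≠ 0) : δ ∈ rootComponent Φ α :=
  ⟨hδ, hγ.2.tail ⟨hγ.1, hδ, h⟩⟩

namespace IsReducedRootSet

variable {Φ : Set V} {α β γ δ η : V}

lemma ne_zero (hΦ : IsReducedRootSet Φ) (hγ : γ ∈ Φ) : γ ≠ 0 :=
  fun h => hΦ.zero_notMem (h ▸ hγ)

lemma inner_self_pos (hΦ : IsReducedRootSet Φ) (hγ : γ ∈ Φ) : 0 < ⟪γ, γ⟫ :=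
  real_inner_self_pos.2 (hΦ.ne_zero hγ)

lemma sub_smul_mem_of_eq (hΦ : IsReducedRootSet Φ) (hα : α ∈ Φ) (hβ : β ∈ Φ) {c : ℝ}
    (hc : 2 * ⟪β, α⟫ = c * ⟪α, α⟫) : β - c • α ∈ Φ := by
  convert hΦ.sub_smul_mem α hα β hβ
  rw [hc, mul_div_cancel_right₀ _ (hΦ.inner_self_pos hα).ne']

lemma neg_mem (hΦ : IsReducedRootSet Φ) (hγ : γ ∈ Φ) : -γ ∈ Φ := by
  simpa [two_smul] using hΦ.sub_smul_mem_of_eq hγ hγ (c := 2) rfl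

lemma neg_mem_iff (hΦ : IsReducedRootSet Φ) : -γ ∈ Φ ↔ γ ∈ Φ :=
  ⟨fun h => neg_neg γ ▸ hΦ.neg_mem h, hΦ.neg_mem⟩

lemma exists_int_mul_eq (hΦ : IsReducedRootSet Φ) (hα : α ∈ Φ) (hβ : β ∈ Φ) :
    ∃ z : ℤ, 2 * ⟪β, α⟫ = z * ⟪α, α⟫ := by
  obtain ⟨z, hz⟩ := hΦ.exists_int_eq α hα β hβ
  exact ⟨z, by rw [← hz, div_mul_cancel₀ _ (hΦ.inner_self_pos hα).ne']⟩

lemma mem_weightLattice (hΦ : IsReducedRootSet Φ) (hγ : γ ∈ Φ) : γ ∈ weightLattice Φ :=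
  fun δ hδ => hΦ.exists_int_eq δ hδ γ hγ

lemma exists_int_inner_eq (hΦ : IsReducedRootSet Φ) (hγ : (2⁻¹ : ℝ) • γ ∈ weightLattice Φ)
    (hδ : δ ∈ Φ) : ∃ z : ℤ, ⟪γ, δ⟫ = z * ⟪δ, δ⟫ := by
  obtain ⟨z, hz⟩ := hγ δ hδ
  refine ⟨z, ?_⟩
  rw [← hz, real_inner_smul_left, div_mul_cancel₀ _ (hΦ.inner_self_pos hδ).ne']
  ring

lemma eq_or_eq_neg_of_inner_mul_inner_eq (hΦ : IsReducedRootSet Φ) (hγ : γ ∈ Φ) (hδ : δ ∈ Φ)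
    (h : ⟪γ, δ⟫ * ⟪γ, δ⟫ = ⟪γ, γ⟫ * ⟪δ, δ⟫) : δ = γ ∨ δ = -γ := by
  have hnorm : ‖⟪γ, δ⟫‖ = ‖γ‖ * ‖δ‖ := by
    rw [← sq_eq_sq₀ (norm_nonneg _) (by positivity), Real.norm_eq_abs, sq_abs, mul_pow,
      ← real_inner_self_eq_norm_sq, ← real_inner_self_eq_norm_sq, sq, h]
  obtain ⟨r, -, rfl⟩ := (norm_inner_eq_norm_iff (hΦ.ne_zero hγ) (hΦ.ne_zero hδ)).1 hnorm
  rcases hΦ.eq_one_or_eq_neg_one γ hγ r hδ with rfl | rfl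
  · exact .inl (one_smul ℝ γ)
  · exact .inr (neg_one_smul ℝ γ)

lemma eq_two_of_eq_smul (hΦ : IsReducedRootSet Φ) (hα : α ∈ Φ) (hβ : β ∈ weightLattice Φ)
    {m : ℤ} (hm : 1 < m) (hdiv : α = (m : ℝ) • β) : m = 2 := by
  have hβ0 : β ≠ 0 := by
    rintro rfl
    exact hΦ.ne_zero hα (by rw [hdiv, smul_zero])
  have hββ : ⟪β, β⟫ ≠ 0 := (real_inner_self_pos.2 hβ0).ne'
  have hm0 : (m : ℝ) ≠ 0 := by exact_mod_cast (one_pos.trans hm).ne'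
  -- `⟨β, α^∨⟩ = 2 / m`
  obtain ⟨z, hz⟩ := hβ α hα
  rw [hdiv, real_inner_smul_right, real_inner_smul_left, real_inner_smul_right] at hz
  have hmz : m * z = 2 := by
    field_simp at hz
    exact_mod_cast hz.symm
  have := Int.le_of_dvd two_pos (Dvd.intro z hmz)
  omega

lemma eq_or_eq_neg_or_short (hΦ : IsReducedRootSet Φ) (hγ : γ ∈ Φ)
    (hγ2 : (2⁻¹ : ℝ) • γ ∈ weightLattice Φ) (hδ : δ ∈ Φ) (hγδ : ⟪γ, δ⟫ ≠ 0) :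
    (δ = γ ∨ δ = -γ) ∨
      (2 * ⟪δ, δ⟫ = ⟪γ, γ⟫ ∧ (2 * ⟪γ, δ⟫ = ⟪γ, γ⟫ ∨ 2 * ⟪γ, δ⟫ = -⟪γ, γ⟫)) := by
  have hγγ := hΦ.inner_self_pos hγ
  have hδδ := hΦ.inner_self_pos hδ
  obtain ⟨z, hz⟩ := hΦ.exists_int_inner_eq hγ2 hδ
  obtain ⟨w, hw⟩ := hΦ.exists_int_mul_eq hγ hδ
  rw [real_inner_comm] at hw
  have hzw : ((z * w : ℤ) : ℝ) * (⟪γ, γ⟫ * ⟪δ, δ⟫) = 2 * (⟪γ, δ⟫ * ⟪γ, δ⟫) := by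
    push_cast
    linear_combination (-(w : ℝ) * ⟪γ, γ⟫) * hz - ⟪γ, δ⟫ * hw
  have hCS := real_inner_mul_inner_self_le γ δ
  have hsq : 0 < ⟪γ, δ⟫ * ⟪γ, δ⟫ := mul_self_pos.2 hγδ
  have hpos : 0 < z * w := by
    by_contra! h
    have : ((z * w : ℤ) : ℝ) ≤ 0 := by exact_mod_cast h
    nlinarith
  have hle : z * w ≤ 2 := by
    by_contra! h
    have : (3 : ℝ) ≤ ((z * w : ℤ) : ℝ) := by exact_mod_cast h
    nlinarith
  interval_cases hzw' : z * w
  · right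
    rcases Int.mul_eq_one_iff_eq_one_or_neg_one.1 hzw' with ⟨rfl, rfl⟩ | ⟨rfl, rfl⟩
    · push_cast at hz hw
      exact ⟨by linarith, .inl (by linarith)⟩
    · push_cast at hz hw
      exact ⟨by linarith, .inr (by linarith)⟩
  · left
    push_cast at hzw
    exact hΦ.eq_or_eq_neg_of_inner_mul_inner_eq hγ hδ (by linarith)

lemma inner_eq_zero_of_half_mem_weightLattice (hΦ : IsReducedRootSet Φ) (hγ : γ ∈ Φ)
    (hγ2 : (2⁻¹ : ℝ) • γ ∈ weightLattice Φ) (hη : η ∈ Φ) (hη2 : (2⁻¹ : ℝ) • η ∈ weightLattice Φ)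
    (h₁ : η ≠ γ) (h₂ : η ≠ -γ) : ⟪γ, η⟫ = 0 := by
  by_contra hγη
  have hηγ : ⟪η, γ⟫ ≠ 0 := by rwa [real_inner_comm]
  have h₂' : γ ≠ -η := fun h => h₂ (by rw [h, neg_neg])
  rcases hΦ.eq_or_eq_neg_or_short hγ hγ2 hη hγη with h | ⟨hγ_long, -⟩
  · exact h.elim h₁ h₂
  rcases hΦ.eq_or_eq_neg_or_short hη hη2 hγ hηγ with h | ⟨hη_long, -⟩
  · exact h.elim (fun h => h₁ h.symm) h₂'
  linarith [hΦ.inner_self_pos hγ]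

lemma neg_mem_rootComponent (hΦ : IsReducedRootSet Φ) (hγ : γ ∈ rootComponent Φ α) :
    -γ ∈ rootComponent Φ α :=
  mem_rootComponent_of_inner_ne_zero hγ (hΦ.neg_mem hγ.1)
    (by rw [inner_neg_right, neg_ne_zero]; exact (hΦ.inner_self_pos hγ.1).ne')

lemma neg_mem_longDivisibleRoots (hΦ : IsReducedRootSet Φ) (hγ : γ ∈ longDivisibleRoots Φ α) :
    -γ ∈ longDivisibleRoots Φ α :=
  ⟨hΦ.neg_mem_rootComponent hγ.1, by rw [inner_neg_neg, hγ.2.1],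
    by rw [smul_neg]; exact (weightLattice Φ).neg_mem hγ.2.2⟩

/-- `γ - 2 • δ` is the reflection of `γ` in `δ`, as `⟨γ, δ^∨⟩ = 2`. -/
lemma sub_two_smul_mem_longDivisibleRoots (hΦ : IsReducedRootSet Φ)
    (hγ : γ ∈ longDivisibleRoots Φ α) (hδ : δ ∈ rootComponent Φ α)
    (hδδ : 2 * ⟪δ, δ⟫ = ⟪γ, γ⟫) (hγδ : 2 * ⟪γ, δ⟫ = ⟪γ, γ⟫) :
    γ - (2 : ℝ) • δ ∈ longDivisibleRoots Φ α := by
  have hγγ := hΦ.inner_self_pos hγ.1.1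
  have hmem : γ - (2 : ℝ) • δ ∈ Φ := hΦ.sub_smul_mem_of_eq hδ.1 hγ.1.1 (by linarith)
  have hadj : ⟪δ, γ - (2 : ℝ) • δ⟫ ≠ 0 := by
    rw [inner_sub_right, real_inner_smul_right, real_inner_comm]
    linarith
  refine ⟨mem_rootComponent_of_inner_ne_zero hδ hmem hadj, ?_, ?_⟩
  · rw [← hγ.2.1, inner_sub_sub_self, real_inner_smul_left, real_inner_smul_right,
      real_inner_smul_left, real_inner_smul_right, real_inner_comm γ δ]
    linarith
  · rw [smul_sub, smul_smul, inv_mul_cancel₀ two_ne_zero, one_smul]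
    exact sub_mem hγ.2.2 (hΦ.mem_weightLattice hδ.1)

end IsReducedRootSet

end RootSets

lemma Set.Finite.exists_fin_enum_up_to_neg {G : Type*} [InvolutiveNeg G] {L : Set G}
    (hL : L.Finite) :
    ∃ (N : ℕ) (f : Fin N → G), (∀ a, f a ∈ L) ∧ (∀ a b, f a = f b ∨ f a = -f b → a = b) ∧
      ∀ γ ∈ L, ∃ a, γ = f a ∨ γ = -f a := by
  obtain ⟨T, hTL, hbij⟩ := Set.exists_subset_bijOn L fun γ : G => ({γ, -γ} : Set G)
  have : Fintype T := (hL.subset hTL).fintype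
  let g := (Fintype.equivFin T).symm
  refine ⟨Fintype.card T, fun a => g a, fun a => hTL (g a).2, fun a b hab => ?_, fun γ hγ => ?_⟩
  · refine g.injective (Subtype.ext (hbij.injOn (g a).2 (g b).2 ?_))
    rcases hab with h | h <;> simp [h, Set.pair_comm]
  · obtain ⟨δ, hδT, hδ⟩ := hbij.surjOn ⟨γ, hγ, rfl⟩
    obtain ⟨a, ha⟩ := g.surjective ⟨δ, hδT⟩
    have : γ ∈ ({δ, -δ} : Set G) := by
      rw [show ({δ, -δ} : Set G) = {γ, -γ} from hδ]
      exact Set.mem_insert γ _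
    exact ⟨a, by simpa [ha] using this⟩

section Frame

variable {V : Type*} [NormedAddCommGroup V] [InnerProductSpace ℝ V]
  {ι : Type*} {e : ι → V} {a : ι} {v w : V}

def IsPmSum (x y v : V) : Prop := v = x + y ∨ v = x - y ∨ v = -(x + y) ∨ v = -(x - y)

def typeCRoots (e : ι → V) (S : Set ι) : Set V :=
  {v | (∃ a ∈ S, v = (2 : ℝ) • e a ∨ v = -((2 : ℝ) • e a)) ∨
    ∃ a ∈ S, ∃ b ∈ S, a ≠ b ∧ IsPmSum (e a) (e b) v}

lemma typeCRoots_mono {S S' : Set ι} (h : S ⊆ S') : typeCRoots e S ⊆ typeCRoots e S' := by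
  rintro v (⟨a, ha, hv⟩ | ⟨a, ha, b, hb, hab, hv⟩)
  exacts [.inl ⟨a, h ha, hv⟩, .inr ⟨a, h ha, b, h hb, hab, hv⟩]

lemma exists_inner_ne_zero_of_mem_typeCRoots {S : Set ι} (hv : v ∈ typeCRoots e S)
    (h : ⟪v, w⟫ ≠ 0) : ∃ a ∈ S, ⟪e a, w⟫ ≠ 0 := by
  by_contra! H
  refine h ?_
  clear h
  rcases hv with ⟨a, ha, rfl | rfl⟩ | ⟨a, ha, b, hb, -, rfl | rfl | rfl | rfl⟩ <;>
    simp [inner_add_left, inner_sub_left, real_inner_smul_left, *]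

lemma mem_of_inner_ne_zero_of_mem_typeCRoots (horth : Pairwise fun a b => ⟪e a, e b⟫ = 0)
    {S : Set ι} (hv : v ∈ typeCRoots e S) (h : ⟪e a, v⟫ ≠ 0) : a ∈ S := by
  by_contra haS
  have H : ∀ b ∈ S, ⟪e a, e b⟫ = 0 := fun b hb => horth fun hab => haS (hab ▸ hb)
  refine h ?_
  clear h
  rcases hv with ⟨b, hb, rfl | rfl⟩ | ⟨b, hb, c, hc, -, rfl | rfl | rfl | rfl⟩ <;>
    simp [inner_add_right, inner_sub_right, real_inner_smul_right, *]

lemma isPmSum_of_two_smul_eq {x y x' y' δ : V} (h : (2 : ℝ) • δ = x' - y')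
    (hx : x' = (2 : ℝ) • x ∨ x' = -((2 : ℝ) • x)) (hy : y' = (2 : ℝ) • y ∨ y' = -((2 : ℝ) • y)) :
    IsPmSum x y δ := by
  have h2 : ∀ u, (2 : ℝ) • δ = (2 : ℝ) • u → δ = u :=
    fun u => (smul_right_injective V (two_ne_zero : (2 : ℝ) ≠ 0) ·)
  rcases hx with rfl | rfl <;> rcases hy with rfl | rfl
  · exact .inr (.inl (h2 _ (by rw [h]; module)))
  · exact .inl (h2 _ (by rw [h]; module))
  · exact .inr (.inr (.inl (h2 _ (by rw [h]; module))))
  · exact .inr (.inr (.inr (h2 _ (by rw [h]; module))))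

end Frame

section Linked

variable {V : Type*} [AddCommMagma V] {Φ : Set V} {ι : Type*} {e : ι → V} {a b : ι}

def Linked (Φ : Set V) (e : ι → V) (a b : ι) : Prop := a = b ∨ e a + e b ∈ Φ

lemma Linked.symm (h : Linked Φ e a b) : Linked Φ e b a :=
  h.imp Eq.symm fun h => by rwa [add_comm]

end Linked

section FrameRoots

variable {V : Type*} [NormedAddCommGroup V] [InnerProductSpace ℝ V] {Φ : Set V}
  {ι : Type*} [DecidableEq ι] {e : ι → V} {t : ℝ} {a b c : ι} {v : V}

namespace IsReducedRootSet

lemma add_mem_iff_sub_mem (hΦ : IsReducedRootSet Φ)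
    (he : ∀ a b, ⟪e a, e b⟫ = if a = b then t else 0) (h2b : (2 : ℝ) • e b ∈ Φ) (hab : a ≠ b) :
    e a + e b ∈ Φ ↔ e a - e b ∈ Φ := by
  have hbb : ⟪e b, e b⟫ = t := by rw [he, if_pos rfl]
  have hab' : ⟪e a, e b⟫ = 0 := by rw [he, if_neg hab]
  constructor <;> intro h
  · convert hΦ.sub_smul_mem_of_eq h2b h (c := 1) ?_ using 1
    · module
    · simp only [inner_add_left, real_inner_smul_left, real_inner_smul_right, hbb, hab']
      ring
  · convert hΦ.sub_smul_mem_of_eq h2b h (c := -1) ?_ using 1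
    · module
    · simp only [inner_sub_left, real_inner_smul_left, real_inner_smul_right, hbb, hab']
      ring

lemma mem_iff_add_mem_of_isPmSum (hΦ : IsReducedRootSet Φ)
    (he : ∀ a b, ⟪e a, e b⟫ = if a = b then t else 0) (h2b : (2 : ℝ) • e b ∈ Φ) (hab : a ≠ b)
    (hv : IsPmSum (e a) (e b) v) : v ∈ Φ ↔ e a + e b ∈ Φ := by
  have key := hΦ.add_mem_iff_sub_mem he h2b hab
  rcases hv with rfl | rfl | rfl | rfl
  exacts [Iff.rfl, key.symm, hΦ.neg_mem_iff, hΦ.neg_mem_iff.trans key.symm]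

end IsReducedRootSet

/-- Reflecting `e a + e b` in `e b + e c` gives `e a - e c`. -/
lemma Linked.trans (hΦ : IsReducedRootSet Φ)
    (he : ∀ a b, ⟪e a, e b⟫ = if a = b then t else 0) (h2e : ∀ a, (2 : ℝ) • e a ∈ Φ)
    (hab : Linked Φ e a b) (hbc : Linked Φ e b c) : Linked Φ e a c := by
  rcases hab with rfl | hab
  · exact hbc
  rcases hbc with rfl | hbc
  · exact .inr hab
  by_cases hac : a = c
  · exact .inl hac
  by_cases hab' : a = b
  · exact hab' ▸ .inr hbc
  by_cases hbc' : b = c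
  · exact hbc' ▸ .inr hab
  refine .inr ((hΦ.add_mem_iff_sub_mem he (h2e c) hac).2 ?_)
  convert hΦ.sub_smul_mem_of_eq hbc hab (c := 1) ?_ using 1
  · module
  · simp only [inner_add_left, inner_add_right, he, hab', hac, hbc', Ne.symm hbc', if_true,
      if_false]
    ring

end FrameRoots

section LongRootFrame

variable {V : Type*} [NormedAddCommGroup V] [InnerProductSpace ℝ V] {Φ : Set V} {α : V}
  {ι : Type*} [DecidableEq ι] {e : ι → V} {t : ℝ}

structure IsLongRootFrame (Φ : Set V) (α : V) (e : ι → V) (t : ℝ) : Prop where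
  inner_eq : ∀ a b, ⟪e a, e b⟫ = if a = b then t else 0
  pos : 0 < t
  two_smul_mem : ∀ a, (2 : ℝ) • e a ∈ longDivisibleRoots Φ α
  exists_eq : ∀ γ ∈ longDivisibleRoots Φ α, ∃ a, γ = (2 : ℝ) • e a ∨ γ = -((2 : ℝ) • e a)

namespace IsLongRootFrame

lemma pairwise_inner_eq_zero (hF : IsLongRootFrame Φ α e t) :
    Pairwise fun a b => ⟪e a, e b⟫ = 0 :=
  fun a b hab => (hF.inner_eq a b).trans (if_neg hab)

lemma two_smul_mem_root (hF : IsLongRootFrame Φ α e t) (a : ι) : (2 : ℝ) • e a ∈ Φ :=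
  (hF.two_smul_mem a).1.1

lemma eq_or_isPmSum_of_inner_ne_zero (hF : IsLongRootFrame Φ α e t) (hΦ : IsReducedRootSet Φ)
    {a : ι} {δ : V} (hδ : δ ∈ rootComponent Φ α) (hδa : ⟪e a, δ⟫ ≠ 0) :
    (δ = (2 : ℝ) • e a ∨ δ = -((2 : ℝ) • e a)) ∨ ∃ c, c ≠ a ∧ IsPmSum (e a) (e c) δ := by
  have ha := hF.two_smul_mem a
  have hne : ⟪(2 : ℝ) • e a, δ⟫ ≠ 0 := by
    rw [real_inner_smul_left]
    exact mul_ne_zero two_ne_zero hδa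
  rcases hΦ.eq_or_eq_neg_or_short ha.1.1 ha.2.2 hδ.1 hne with hpm | ⟨hshort, hsign⟩
  · exact .inl hpm
  right
  obtain ⟨γ, hγ, hγa, hγδ⟩ : ∃ γ ∈ longDivisibleRoots Φ α,
      (γ = (2 : ℝ) • e a ∨ γ = -((2 : ℝ) • e a)) ∧ 2 * ⟪γ, δ⟫ = ⟪γ, γ⟫ := by
    rcases hsign with h | h
    · exact ⟨_, ha, .inl rfl, h⟩
    · refine ⟨_, hΦ.neg_mem_longDivisibleRoots ha, .inr rfl, ?_⟩
      rw [inner_neg_left, inner_neg_neg]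
      linarith
  -- `γ' := γ - 2δ` is long, divisible and orthogonal to `γ`, so `γ' = ±2 e c` with `c ≠ a`,
  -- and `2δ = γ - γ'`.
  have hγ' := hΦ.sub_two_smul_mem_longDivisibleRoots hγ hδ
    (by rw [hγ.2.1, ← ha.2.1]; exact hshort) hγδ
  obtain ⟨c, hc⟩ := hF.exists_eq _ hγ'
  have horth : ⟪γ, γ - (2 : ℝ) • δ⟫ = 0 := by
    rw [inner_sub_right, real_inner_smul_right]
    linarith
  refine ⟨c, ?_, isPmSum_of_two_smul_eq (by module) hγa hc⟩
  rintro rfl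
  have hcc := hF.inner_eq c c
  rw [if_pos rfl] at hcc
  rcases hγa with h₁ | h₁ <;> rcases hc with h₂ | h₂ <;>
    rw [h₂, h₁] at horth <;>
    simp only [inner_neg_left, inner_neg_right, real_inner_smul_left, real_inner_smul_right,
      hcc, neg_neg, neg_eq_zero] at horth <;>
    linarith [hF.pos]

lemma rootComponent_subset (hF : IsLongRootFrame Φ α e t) (hΦ : IsReducedRootSet Φ) {i : ι}
    (hi : α = (2 : ℝ) • e i ∨ α = -((2 : ℝ) • e i)) :
    rootComponent Φ α ⊆ typeCRoots e {a | Linked Φ e a i} := by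
  rintro δ ⟨-, hpath⟩
  induction hpath with
  | refl => exact .inl ⟨i, .inl rfl, hi⟩
  | @tail β δ hpath hadj ih =>
    obtain ⟨hβ, hδ, hβδ⟩ := hadj
    obtain ⟨a, hai, hδa⟩ := exists_inner_ne_zero_of_mem_typeCRoots ih hβδ
    rcases hF.eq_or_isPmSum_of_inner_ne_zero hΦ ⟨hδ, hpath.tail ⟨hβ, hδ, hβδ⟩⟩ hδa with
      h | ⟨c, hca, hc⟩
    · exact .inl ⟨a, hai, h⟩
    · have hac : e a + e c ∈ Φ :=
        (hΦ.mem_iff_add_mem_of_isPmSum hF.inner_eq (hF.two_smul_mem_root c) hca.symm hc).1 hδ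
      have hci : Linked Φ e c a := Linked.symm (.inr hac)
      exact .inr ⟨a, hai, c, hci.trans hΦ hF.inner_eq hF.two_smul_mem_root hai, hca.symm, hc⟩

lemma rootComponent_eq (hF : IsLongRootFrame Φ α e t) (hΦ : IsReducedRootSet Φ) {i : ι}
    (hi : α = (2 : ℝ) • e i ∨ α = -((2 : ℝ) • e i)) :
    rootComponent Φ α = typeCRoots e Set.univ := by
  have hsub := hF.rootComponent_subset hΦ hi
  have hlinked : ∀ a, Linked Φ e a i := fun a =>
    mem_of_inner_ne_zero_of_mem_typeCRoots hF.pairwise_inner_eq_zero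
      (hsub (hF.two_smul_mem a).1)
      (by rw [real_inner_smul_right, hF.inner_eq, if_pos rfl]; linarith [hF.pos])
  refine (hsub.trans (typeCRoots_mono (Set.subset_univ _))).antisymm ?_
  rintro v (⟨a, -, rfl | rfl⟩ | ⟨a, -, b, -, hab, hv⟩)
  · exact (hF.two_smul_mem a).1
  · exact hΦ.neg_mem_rootComponent (hF.two_smul_mem a).1
  · have hadd : e a + e b ∈ Φ := ((hlinked a).trans hΦ hF.inner_eq hF.two_smul_mem_root
      (hlinked b).symm).resolve_left hab
    have hvΦ := (hΦ.mem_iff_add_mem_of_isPmSum hF.inner_eq (hF.two_smul_mem_root b) hab hv).2 hadd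
    refine mem_rootComponent_of_inner_ne_zero (hF.two_smul_mem a).1 hvΦ ?_
    have haa := hF.inner_eq a a
    have hab' := hF.inner_eq a b
    rw [if_pos rfl] at haa
    rw [if_neg hab] at hab'
    rcases hv with rfl | rfl | rfl | rfl <;>
      simp only [inner_add_right, inner_sub_right, inner_neg_right, real_inner_smul_left, haa,
        hab'] <;> linarith [hF.pos]

end IsLongRootFrame

lemma IsReducedRootSet.exists_isLongRootFrame (hΦ : IsReducedRootSet Φ) (hfin : Φ.Finite)
    (hα : α ∈ Φ) : ∃ (N : ℕ) (e : Fin N → V), IsLongRootFrame Φ α e (⟪α, α⟫ / 4) := by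
  obtain ⟨N, f, hfL, hfinj, hcover⟩ :=
    (hfin.subset fun γ (hγ : γ ∈ longDivisibleRoots Φ α) => hγ.1.1).exists_fin_enum_up_to_neg
  have h2 : ∀ a, (2 : ℝ) • (2⁻¹ : ℝ) • f a = f a := fun a => smul_inv_smul₀ two_ne_zero _
  refine ⟨N, fun a => (2⁻¹ : ℝ) • f a, ⟨fun a b => ?_, by linarith [hΦ.inner_self_pos hα],
    fun a => by rw [h2]; exact hfL a, fun γ hγ => by simpa only [h2] using hcover γ hγ⟩⟩
  rw [real_inner_smul_left, real_inner_smul_right]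
  split_ifs with hab
  · rw [hab, (hfL b).2.1]
    ring
  · rw [hΦ.inner_eq_zero_of_half_mem_weightLattice (hfL a).1.1 (hfL a).2.2 (hfL b).1.1 (hfL b).2.2
      (fun h => hab (hfinj b a (.inl h)).symm) (fun h => hab (hfinj b a (.inr h)).symm)]
    ring

end LongRootFrame

/-- In a reduced crystallographic root system `Φ` (in a real inner product space), if a
root `α` is divisible in the weight lattice, `α = m • β` with `m > 1` and `β` a weight,
then `m = 2` and the irreducible component of `α` (its non-orthogonality connectivity
component) has type `C_N` with `α` a long root: there is a pairwise orthogonal family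
`e_1, ..., e_N` of vectors of equal length with the component equal to
`{±e_a ± e_b : a ≠ b} ∪ {±2e_a}` and `α = ±2e_i` for some `i`. -/
theorem stmt_19 (V : Type*) [NormedAddCommGroup V] [InnerProductSpace ℝ V]
    (Φ : Set V) (hfin : Φ.Finite) (h0 : (0 : V) ∉ Φ)
    (hrefl : ∀ α ∈ Φ, ∀ β ∈ Φ,
      β - ((2 * (inner ℝ β α : ℝ) / (inner ℝ α α : ℝ)) : ℝ) • α ∈ Φ)
    (hcrys : ∀ α ∈ Φ, ∀ β ∈ Φ, ∃ z : ℤ, (2 * (inner ℝ β α : ℝ) / (inner ℝ α α : ℝ)) = (z : ℝ))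
    (hred : ∀ α ∈ Φ, ∀ c : ℝ, c • α ∈ Φ → c = 1 ∨ c = -1)
    (α : V) (hα : α ∈ Φ) (m : ℤ) (hm : 1 < m) (β : V)
    (hβ : ∀ γ ∈ Φ, ∃ z : ℤ, (2 * (inner ℝ β γ : ℝ) / (inner ℝ γ γ : ℝ)) = (z : ℝ))
    (hdiv : α = (m : ℝ) • β) :
    m = 2 ∧
      ∃ (N : ℕ) (e : Fin N → V) (t : ℝ), 0 < t ∧
        (∀ a b : Fin N, (inner ℝ (e a) (e b) : ℝ) = if a = b then t else 0) ∧
        (∃ i : Fin N, α = (2 : ℝ) • e i ∨ α = -((2 : ℝ) • e i)) ∧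
        {γ ∈ Φ | Relation.ReflTransGen
            (fun u v => u ∈ Φ ∧ v ∈ Φ ∧ (inner ℝ u v : ℝ) ≠ 0) α γ} =
          {v : V | (∃ a : Fin N, v = (2 : ℝ) • e a ∨ v = -((2 : ℝ) • e a)) ∨
            ∃ a b : Fin N, a ≠ b ∧
              (v = e a + e b ∨ v = e a - e b ∨ v = -(e a + e b) ∨ v = -(e a - e b))} := by
  have hΦ : IsReducedRootSet Φ := ⟨h0, hrefl, hcrys, hred⟩
  have hm2 : m = 2 := hΦ.eq_two_of_eq_smul hα hβ hm hdiv
  have hαL : α ∈ longDivisibleRoots Φ α := by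
    refine ⟨⟨hα, .refl⟩, rfl, ?_⟩
    rwa [hdiv, hm2, smul_smul, Int.cast_two, inv_mul_cancel₀ two_ne_zero, one_smul]
  obtain ⟨N, e, hF⟩ := hΦ.exists_isLongRootFrame hfin hα
  obtain ⟨i, hi⟩ := hF.exists_eq α hαL
  refine ⟨hm2, N, e, _, hF.pos, hF.inner_eq, ⟨i, hi⟩, ?_⟩
  have hC := hF.rootComponent_eq hΦ hi
  simp only [typeCRoots, IsPmSum, Set.mem_univ, true_and] at hC
  exact hC
end
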